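/- arXiv:1009.6036 — 8 statements merged into one kernel-verified Lean document; each statement's English description precedes it below -/
import Mathlib

section
/- Let A be an n×n doubly stochastic matrix. Define the sample variance V(x) = Σ_{i=1}^n (x_i - x̄)², where x̄ = (1/n)Σ_i x_i. Then for all x ∈ ℝⁿ, V(Ax) = V(x) - Σ_{i<j} w_{ij}(x_i - x_j)², where w_{ij} is the (i,j)-th entry of AᵀA. -/
/-!
Both `A` and `W = AᵀA` have all row and column sums `1`. Column sums `1` make `A` preserve the
mean, so only the sums of squares need comparing, and `‖Ax‖² = xᵀWx`. Row and column sums `1`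
turn `‖x‖² - xᵀWx` into the Laplacian quadratic form `½ ∑ᵢ ∑ⱼ wᵢⱼ (xᵢ - xⱼ)²`, which
symmetry of `W` reduces to the sum over `i < j`.
-/

open Matrix

/-- Sample variance of a vector in ℝⁿ. -/
noncomputable def sampleVar {n : ℕ} (x : Fin n → ℝ) : ℝ :=
  ∑ i, (x i - (∑ j, x j) / n) ^ 2

open Finset

theorem sampleVar_eq_sum_sq_sub {n : ℕ} (x : Fin n → ℝ) :
    sampleVar x = ∑ i, x i ^ 2 - (∑ i, x i) ^ 2 / n := by
  obtain rfl | hn := n.eq_zero_or_pos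
  · simp [sampleVar]
  simp only [sampleVar, sub_sq, sum_add_distrib, sum_sub_distrib, ← sum_mul, ← mul_sum,
    sum_const, card_univ, Fintype.card_fin, nsmul_eq_mul]
  field_simp
  ring

theorem Finset.sum_sum_eq_two_nsmul_sum_sum_Iio {ι M : Type*} [Fintype ι] [LinearOrder ι]
    [LocallyFiniteOrderBot ι] [AddCommMonoid M] (F : ι → ι → M) (hsymm : ∀ i j, F i j = F j i)
    (hdiag : ∀ i, F i i = 0) :
    ∑ i, ∑ j, F i j = 2 • ∑ j, ∑ i ∈ Iio j, F i j := by
  have split : ∀ j, ∑ i, F i j = ∑ i ∈ Iio j, F i j + ∑ i with j < i, F i j := by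
    intro j
    have hge : univ.filter (¬· < j) = insert j (univ.filter (j < ·)) := by
      ext i; simp [le_iff_eq_or_lt, eq_comm]
    rw [← sum_filter_add_sum_filter_not univ (· < j), filter_gt_eq_Iio, hge,
      sum_insert (by simp), hdiag, zero_add]
  have swap : ∑ j, ∑ i with j < i, F i j = ∑ j, ∑ i ∈ Iio j, F i j := by
    rw [sum_comm' (t' := univ) (s' := Iio)]
    · simp_rw [hsymm]
    · simp
  rw [sum_comm, two_nsmul]
  simp_rw [split, sum_add_distrib, swap]

section
variable {ι R : Type*} [Fintype ι]

theorem Matrix.sum_mulVec_of_one_vecMul [Semiring R] {A : Matrix ι ι R} (hA : 1 ᵥ* A = 1)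
    (x : ι → R) : ∑ i, (A *ᵥ x) i = ∑ i, x i := by
  simpa [dotProduct, hA] using dotProduct_mulVec 1 A x

theorem Matrix.sum_sq_mulVec [CommSemiring R] (A : Matrix ι ι R) (x : ι → R) :
    ∑ i, (A *ᵥ x) i ^ 2 = x ⬝ᵥ (Aᵀ * A) *ᵥ x := by
  rw [← mulVec_mulVec, dotProduct_mulVec, vecMul_transpose]
  simp [dotProduct, sq]

theorem Matrix.sum_sum_mul_sub_sq [CommRing R] {W : Matrix ι ι R} (hrow : W *ᵥ 1 = 1)
    (hcol : 1 ᵥ* W = 1) (x : ι → R) :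
    ∑ i, ∑ j, W i j * (x i - x j) ^ 2 = 2 * (∑ i, x i ^ 2 - x ⬝ᵥ W *ᵥ x) := by
  have hrow' : ∀ i, ∑ j, W i j = 1 := fun i => by
    simpa [mulVec, dotProduct] using congrFun hrow i
  have hcol' : ∀ j, ∑ i, W i j = 1 := fun j => by
    simpa [vecMul, dotProduct] using congrFun hcol j
  have expand : ∀ i j, W i j * (x i - x j) ^ 2
      = x i ^ 2 * W i j + W i j * x j ^ 2 - 2 * (x i * (W i j * x j)) := fun i j => by ring
  simp only [expand, sum_sub_distrib, sum_add_distrib, ← mul_sum, ← sum_mul, hrow']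
  rw [sum_comm (f := fun i j => W i j * x j ^ 2)]
  simp only [← sum_mul, hcol', one_mul, mul_one, dotProduct, mulVec, sq]
  ring

theorem Matrix.sum_sq_mulVec_eq_sub [LinearOrder ι] [LocallyFiniteOrderBot ι]
    {A : Matrix ι ι ℝ} (hA : A *ᵥ 1 = 1) (hA' : 1 ᵥ* A = 1) (x : ι → ℝ) :
    ∑ i, (A *ᵥ x) i ^ 2 = ∑ i, x i ^ 2 - ∑ j, ∑ i ∈ Iio j, (Aᵀ * A) i j * (x i - x j) ^ 2 := by
  have hW : (Aᵀ * A) *ᵥ 1 = 1 := by rw [← mulVec_mulVec, hA, mulVec_transpose, hA']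
  have hW' : 1 ᵥ* (Aᵀ * A) = 1 := by rw [← vecMul_vecMul, vecMul_transpose, hA, hA']
  have hpairs := sum_sum_eq_two_nsmul_sum_sum_Iio (fun i j => (Aᵀ * A) i j * (x i - x j) ^ 2)
    (fun i j => by rw [(isSymm_transpose_mul_self A).apply]; ring) (by simp)
  rw [sum_sum_mul_sub_sq hW hW', two_nsmul] at hpairs
  rw [sum_sq_mulVec]
  linarith

end

theorem stmt0_general (n : ℕ) (A : Matrix (Fin n) (Fin n) ℝ)
    (hrow : ∀ i, ∑ j, A i j = 1)
    (hcol : ∀ j, ∑ i, A i j = 1)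
    (x : Fin n → ℝ) :
    sampleVar (A.mulVec x) =
      sampleVar x - ∑ j, ∑ i ∈ Finset.Iio j, (Aᵀ * A) i j * (x i - x j) ^ 2 := by
  have hA : A *ᵥ 1 = 1 := by ext i; simpa [mulVec, dotProduct] using hrow i
  have hA' : 1 ᵥ* A = 1 := by ext j; simpa [vecMul, dotProduct] using hcol j
  rw [sampleVar_eq_sum_sq_sub, sampleVar_eq_sum_sq_sub, sum_mulVec_of_one_vecMul hA',
    sum_sq_mulVec_eq_sub hA hA']
  ring

theorem stmt0 (n : ℕ) (hn : 0 < n) (A : Matrix (Fin n) (Fin n) ℝ)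
    (hnonneg : ∀ i j, 0 ≤ A i j)
    (hrow : ∀ i, ∑ j, A i j = 1)
    (hcol : ∀ j, ∑ i, A i j = 1)
    (x : Fin n → ℝ) :
    sampleVar (A.mulVec x) =
      sampleVar x - ∑ j, ∑ i ∈ Finset.Iio j, (Aᵀ * A) i j * (x i - x j) ^ 2 :=
  stmt0_general n A hrow hcol x
end

section
/- Let A be an n×n row-stochastic matrix with positive diagonal entries whose smallest positive entry is at least η > 0. Let (S⁻, S⁺) be a partition of {1,...,n} into two disjoint nonempty sets, and let w_{ij} denote the (i,j) entry of AᵀA. If Σ_{i∈S⁻, j∈S⁺} w_{ij} > 0, then Σ_{i∈S⁻, j∈S⁺} w_{ij} ≥ η/2. -/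
/-!
Expanding the product gives `∑_{i ∈ S⁻, j ∈ S⁺} (AᵀA)ᵢⱼ = ∑ₖ xₖ yₖ` with `xₖ = ∑_{i ∈ S⁻} aₖᵢ` and
`yₖ = ∑_{j ∈ S⁺} aₖⱼ = 1 - xₖ`. If the sum is positive, some row `k` meets both `S⁻` and `S⁺`,
so `xₖ, yₖ ≥ η`; as `xₖ + yₖ = 1`, one of them is at least `1/2`, whence `xₖ yₖ ≥ η/2`.
-/

open Matrix

theorem Matrix.sum_sum_transpose_mul_self_apply {m n R : Type*} [Fintype m] [CommSemiring R]
    (A : Matrix m n R) (s t : Finset n) :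
    ∑ i ∈ s, ∑ j ∈ t, (Aᵀ * A) i j = ∑ k, (∑ i ∈ s, A k i) * ∑ j ∈ t, A k j := by
  simp only [mul_apply, transpose_apply, Finset.sum_mul_sum]
  exact (Finset.sum_congr rfl fun _ _ => Finset.sum_comm).trans Finset.sum_comm

theorem Finset.le_sum_of_pos_imp_le {ι M : Type*} [AddCommMonoid M] [PartialOrder M]
    [IsOrderedAddMonoid M] {s : Finset ι} {f : ι → M} {η : M} (hf : ∀ i ∈ s, 0 ≤ f i)
    (hη : ∀ i ∈ s, 0 < f i → η ≤ f i) (hpos : 0 < ∑ i ∈ s, f i) : η ≤ ∑ i ∈ s, f i := by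
  obtain ⟨i, hi, hfi⟩ := (Finset.sum_pos_iff_of_nonneg hf).1 hpos
  exact (hη i hi hfi).trans (Finset.single_le_sum hf hi)

theorem div_two_le_mul_of_add_eq_one {K : Type*} [Field K] [LinearOrder K] [IsStrictOrderedRing K]
    {x y η : K} (hxy : x + y = 1) (hx : 0 ≤ x) (hy : 0 ≤ y) (hηx : η ≤ x) (hηy : η ≤ y) :
    η / 2 ≤ x * y := by
  rcases le_total x y with h | h <;> nlinarith

theorem stmt1_general (n : ℕ) (A : Matrix (Fin n) (Fin n) ℝ) (η : ℝ)
    (hnonneg : ∀ i j, 0 ≤ A i j)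
    (hrow : ∀ i, ∑ j, A i j = 1)
    (hmin : ∀ i j, 0 < A i j → η ≤ A i j)
    (Sm Sp : Finset (Fin n))
    (hdisj : Disjoint Sm Sp) (hunion : Sm ∪ Sp = Finset.univ)
    (hpos : 0 < ∑ i ∈ Sm, ∑ j ∈ Sp, (Aᵀ * A) i j) :
    η / 2 ≤ ∑ i ∈ Sm, ∑ j ∈ Sp, (Aᵀ * A) i j := by
  rw [sum_sum_transpose_mul_self_apply] at hpos ⊢
  have hrow_nonneg (k : Fin n) (s : Finset (Fin n)) : 0 ≤ ∑ i ∈ s, A k i :=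
    Finset.sum_nonneg fun i _ => hnonneg k i
  have hterm_nonneg (k : Fin n) : 0 ≤ (∑ i ∈ Sm, A k i) * ∑ j ∈ Sp, A k j :=
    mul_nonneg (hrow_nonneg k Sm) (hrow_nonneg k Sp)
  obtain ⟨k, -, hk⟩ := (Finset.sum_pos_iff_of_nonneg fun k _ => hterm_nonneg k).1 hpos
  have hx := pos_of_mul_pos_left hk (hrow_nonneg k Sp)
  have hy := pos_of_mul_pos_right hk (hrow_nonneg k Sm)
  have hsplit : ∑ i ∈ Sm, A k i + ∑ j ∈ Sp, A k j = 1 := by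
    rw [← Finset.sum_union hdisj, hunion, hrow k]
  calc η / 2 ≤ (∑ i ∈ Sm, A k i) * ∑ j ∈ Sp, A k j :=
        div_two_le_mul_of_add_eq_one hsplit hx.le hy.le
          (Finset.le_sum_of_pos_imp_le (fun i _ => hnonneg k i) (fun i _ => hmin k i) hx)
          (Finset.le_sum_of_pos_imp_le (fun j _ => hnonneg k j) (fun j _ => hmin k j) hy)
    _ ≤ ∑ k, (∑ i ∈ Sm, A k i) * ∑ j ∈ Sp, A k j :=
        Finset.single_le_sum (fun k _ => hterm_nonneg k) (Finset.mem_univ k)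

theorem stmt1 (n : ℕ) (A : Matrix (Fin n) (Fin n) ℝ) (η : ℝ) (hη : 0 < η)
    (hnonneg : ∀ i j, 0 ≤ A i j)
    (hrow : ∀ i, ∑ j, A i j = 1)
    (hdiag : ∀ i, 0 < A i i)
    (hmin : ∀ i j, 0 < A i j → η ≤ A i j)
    (Sm Sp : Finset (Fin n))
    (hSm : Sm.Nonempty) (hSp : Sp.Nonempty)
    (hdisj : Disjoint Sm Sp) (hunion : Sm ∪ Sp = Finset.univ)
    (hpos : 0 < ∑ i ∈ Sm, ∑ j ∈ Sp, (Aᵀ * A) i j) :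
    η / 2 ≤ ∑ i ∈ Sm, ∑ j ∈ Sp, (Aᵀ * A) i j :=
  stmt1_general n A η hnonneg hrow hmin Sm Sp hdisj hunion hpos
end

section
/- For any real numbers x_1 ≥ x_2 ≥ ... ≥ x_n with Σ_i x_i = 0 and Σ_i x_i² = 1, we have Σ_{i=1}^{n-1} (x_i - x_{i+1})² ≥ 1/n². -/
/-!
Let `M = x₀ - x_{n-1}` be the spread of the data. Since the `x_i` sum to zero, `x₀ ≥ 0 ≥ x_{n-1}`,
so every `|x_i| ≤ M` and `1 = ∑ x_i² ≤ n M²`. On the other hand the consecutive gaps telescope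
to `M`, so Cauchy–Schwarz gives `M² ≤ (n - 1) ∑ (x_i - x_{i+1})²`. Combining, `1 ≤ n² ∑ (x_i - x_{i+1})²`.
-/

open Finset

lemma sq_le_sq_sub_of_mem_Icc {a b t : ℝ} (ha : a ≤ 0) (hb : 0 ≤ b) (ht : t ∈ Set.Icc a b) :
    t ^ 2 ≤ (b - a) ^ 2 :=
  sq_le_sq' (by linarith [ht.1, ht.2]) (by linarith [ht.1, ht.2])

lemma sum_sq_le_card_mul_sq_of_sum_eq_zero {ι : Type*} {s : Finset ι} {f : ι → ℝ} {a b : ℝ}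
    (hf : ∀ i ∈ s, f i ∈ Set.Icc a b) (hsum : ∑ i ∈ s, f i = 0) :
    ∑ i ∈ s, f i ^ 2 ≤ #s * (b - a) ^ 2 := by
  have hsq : ∀ i ∈ s, f i ^ 2 ≤ (b - a) ^ 2 := by
    intro i hi
    have hcard : (0 : ℝ) < #s := by exact_mod_cast card_pos.mpr ⟨i, hi⟩
    have hlow : #s * a ≤ 0 := by
      simpa [hsum] using card_nsmul_le_sum s f a fun j hj => (hf j hj).1
    have hup : 0 ≤ #s * b := by
      simpa [hsum] using sum_le_card_nsmul s f b fun j hj => (hf j hj).2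
    exact sq_le_sq_sub_of_mem_Icc (nonpos_of_mul_nonpos_right hlow hcard)
      (nonneg_of_mul_nonneg_right hup hcard) (hf i hi)
  simpa using sum_le_card_nsmul s (fun i => f i ^ 2) _ hsq

lemma sq_sub_le_mul_sum_sq_sub_succ (x : ℕ → ℝ) (m : ℕ) :
    (x 0 - x m) ^ 2 ≤ m * ∑ i ∈ range m, (x i - x (i + 1)) ^ 2 := by
  rw [← sum_range_sub']
  simpa using sq_sum_le_card_mul_sum_sq (s := range m) (f := fun i => x i - x (i + 1))

theorem stmt2_general (n : ℕ) (x : ℕ → ℝ)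
    (hsorted : ∀ i, i + 1 < n → x (i + 1) ≤ x i)
    (hsum : ∑ i ∈ Finset.range n, x i = 0)
    (hsq : ∑ i ∈ Finset.range n, (x i) ^ 2 = 1) :
    1 / (n : ℝ) ^ 2 ≤ ∑ i ∈ Finset.range (n - 1), (x i - x (i + 1)) ^ 2 := by
  have hanti : AntitoneOn x (Set.Iio n) :=
    antitoneOn_of_add_one_le Set.ordConnected_Iio fun i _ _ hi => hsorted i hi
  have hbounds : ∀ i ∈ range n, x i ∈ Set.Icc (x (n - 1)) (x 0) := by
    intro i hi
    have hi : i < n := mem_range.mp hi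
    exact ⟨hanti hi (show n - 1 < n by omega) (by omega),
      hanti (show 0 < n by omega) hi (Nat.zero_le i)⟩
  have hspread : 1 ≤ n * (x 0 - x (n - 1)) ^ 2 := by
    simpa [hsq] using sum_sq_le_card_mul_sq_of_sum_eq_zero hbounds hsum
  have hn : 0 < n := Nat.pos_of_ne_zero (by rintro rfl; simp at hsq)
  rw [div_le_iff₀' (by positivity)]
  calc (1 : ℝ) ≤ n * (x 0 - x (n - 1)) ^ 2 := hspread
    _ ≤ n * ((n - 1 : ℕ) * ∑ i ∈ range (n - 1), (x i - x (i + 1)) ^ 2) := by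
      gcongr; exact sq_sub_le_mul_sum_sq_sub_succ x (n - 1)
    _ ≤ n * (n * ∑ i ∈ range (n - 1), (x i - x (i + 1)) ^ 2) := by
      gcongr; exact_mod_cast Nat.sub_le n 1
    _ = n ^ 2 * ∑ i ∈ range (n - 1), (x i - x (i + 1)) ^ 2 := by ring

theorem stmt2 (n : ℕ) (hn : 2 ≤ n) (x : ℕ → ℝ)
    (hsorted : ∀ i, i + 1 < n → x (i + 1) ≤ x i)
    (hsum : ∑ i ∈ Finset.range n, x i = 0)
    (hsq : ∑ i ∈ Finset.range n, (x i) ^ 2 = 1) :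
    1 / (n : ℝ) ^ 2 ≤ ∑ i ∈ Finset.range (n - 1), (x i - x (i + 1)) ^ 2 :=
  stmt2_general n x hsorted hsum hsq
end

section
/- Let A be an n×n symmetric stochastic matrix with n ≥ 3 satisfying a_{ij} = 0 whenever |i − j| > 1 (a tridiagonal 'birth-death' structure), A𝟙 = 𝟙 and 𝟙ᵀA = 𝟙ᵀ. Then A has a real eigenvalue λ with 1 − 6/n² < λ < 1 whose eigenvector v satisfies vᵀ𝟙 = 0. -/
/-!
Let `λ` be the maximum of the Rayleigh quotient of `A` on the hyperplane `𝟙ᗮ`; it is an eigenvalue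
with an eigenvector in `𝟙ᗮ`. For a doubly stochastic `A`,
`∑ i j, a_ij (u_i - u_j)² = 2 (u ⬝ u - u ⬝ A u)`, so `λ < 1` by connectivity, and `λ > 1 - 6/n²`
as soon as some `u ⊥ 𝟙` has `∑ i j, a_ij (u_i - u_j)² < (12/n²) u ⬝ u`. If `trace A > 1/n` the
linear vector `u_i = 2i - (n - 1)` does this. Otherwise the row equations
`a_{k,k+1} + a_{k+1,k+1} + a_{k+1,k+2} = 1` make every odd-indexed edge weight `a_{j,j+1}` at most
`trace A ≤ 1/n`, and the two-valued vector jumping across such an edge near the middle does it.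
-/

open Finset Matrix
open scoped InnerProductSpace

section Rayleigh

variable {E : Type*} [NormedAddCommGroup E] [InnerProductSpace ℝ E] [FiniteDimensional ℝ E]

theorem LinearMap.IsSymmetric.exists_eigenvector_forall_inner_le [Nontrivial E]
    {T : E →ₗ[ℝ] E} (hT : T.IsSymmetric) :
    ∃ μ : ℝ, ∃ v : E, v ≠ 0 ∧ T v = μ • v ∧ ∀ x, ⟪T x, x⟫_ℝ ≤ μ * ⟪x, x⟫_ℝ := by
  obtain ⟨v, hv⟩ := hT.hasEigenvalue_iSup_of_finiteDimensional.exists_hasEigenvector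
  refine ⟨_, v, hv.2, hv.apply_eq_smul, fun x => ?_⟩
  rcases eq_or_ne x 0 with rfl | hx
  · simp
  have hbdd : BddAbove (Set.range fun x : { x : E // x ≠ 0 } =>
      RCLike.re ⟪T x, (x : E)⟫_ℝ / ‖(x : E)‖ ^ 2) :=
    ⟨‖LinearMap.toContinuousLinearMap T‖, by
      rintro _ ⟨y, rfl⟩
      exact (le_abs_self _).trans
        ((LinearMap.toContinuousLinearMap T).rayleighQuotient_le_norm y)⟩
  have := le_ciSup hbdd ⟨x, hx⟩
  rw [real_inner_self_eq_norm_sq]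
  rwa [RCLike.re_to_real, div_le_iff₀ (by positivity)] at this

theorem LinearMap.IsSymmetric.exists_eigenvector_mem_forall_inner_le {T : E →ₗ[ℝ] E}
    (hT : T.IsSymmetric) {V : Submodule ℝ E} (hV : ∀ v ∈ V, T v ∈ V) (hV₀ : V ≠ ⊥) :
    ∃ μ : ℝ, ∃ v ∈ V, v ≠ 0 ∧ T v = μ • v ∧ ∀ x ∈ V, ⟪T x, x⟫_ℝ ≤ μ * ⟪x, x⟫_ℝ := by
  have : Nontrivial V := Submodule.nontrivial_iff_ne_bot.2 hV₀
  obtain ⟨μ, v, hv₀, hTv, hle⟩ := (hT.restrict_invariant hV).exists_eigenvector_forall_inner_le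
  exact ⟨μ, v, v.2, by simpa using hv₀, congrArg Subtype.val hTv,
    fun x hx => hle ⟨x, hx⟩⟩

end Rayleigh

theorem Matrix.IsSymm.exists_eigenvector_sum_eq_zero {ι : Type*} [Fintype ι] [DecidableEq ι]
    [Nontrivial ι] {A : Matrix ι ι ℝ} (hA : A.IsSymm) (hcol : ∀ j, ∑ i, A i j = 1) :
    ∃ μ : ℝ, ∃ v : ι → ℝ, v ≠ 0 ∧ A *ᵥ v = μ • v ∧ ∑ i, v i = 0 ∧
      ∀ u : ι → ℝ, ∑ i, u i = 0 → u ⬝ᵥ (A *ᵥ u) ≤ μ * (u ⬝ᵥ u) := by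
  set V : Submodule ℝ (EuclideanSpace ℝ ι) := (ℝ ∙ WithLp.toLp 2 (1 : ι → ℝ))ᗮ
  have hmem (x : EuclideanSpace ℝ ι) : x ∈ V ↔ ∑ i, x i = 0 := by
    simp [V, Submodule.mem_orthogonal_singleton_iff_inner_right,
      EuclideanSpace.inner_eq_star_dotProduct, dotProduct]
  have hV : ∀ x ∈ V, toEuclideanLin A x ∈ V := by
    intro x hx
    rw [hmem] at hx ⊢
    change ∑ i, (A *ᵥ x.ofLp) i = 0
    simp only [mulVec, dotProduct]
    rw [sum_comm]
    simp [← sum_mul, hcol, hx]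
  have hV₀ : V ≠ ⊥ := by
    obtain ⟨i, j, hij⟩ := exists_pair_ne ι
    rw [Submodule.ne_bot_iff]
    refine ⟨WithLp.toLp 2 (Pi.single i 1 - Pi.single j 1), ?_, ?_⟩
    · simp [hmem, sum_sub_distrib]
    · intro h
      have := congrArg (fun x : EuclideanSpace ℝ ι => x i) h
      simp [hij] at this
  obtain ⟨μ, v, hvV, hv₀, hAv, hle⟩ :=
    LinearMap.IsSymmetric.exists_eigenvector_mem_forall_inner_le
      (isSymmetric_toEuclideanLin_iff.2 (isHermitian_iff_isSymm.2 hA)) hV hV₀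
  refine ⟨μ, v.ofLp, by simpa using hv₀, congrArg WithLp.ofLp hAv, (hmem v).1 hvV, fun u hu => ?_⟩
  -- `⟪x, y⟫` on `EuclideanSpace` unfolds to `ofLp y ⬝ᵥ star (ofLp x)`
  exact hle (WithLp.toLp 2 u) ((hmem _).2 hu)

section DirichletForm

variable {ι : Type*} [Fintype ι] {A : Matrix ι ι ℝ}

def dirichletForm (A : Matrix ι ι ℝ) (u : ι → ℝ) : ℝ :=
  ∑ i, ∑ j, A i j * (u i - u j) ^ 2

theorem dirichletForm_eq (hrow : ∀ i, ∑ j, A i j = 1) (hcol : ∀ j, ∑ i, A i j = 1)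
    (u : ι → ℝ) : dirichletForm A u = 2 * (u ⬝ᵥ u - u ⬝ᵥ (A *ᵥ u)) := by
  have hrow' : ∑ i, ∑ j, A i j * u i ^ 2 = u ⬝ᵥ u := by
    simp [← sum_mul, hrow, dotProduct, sq]
  have hcol' : ∑ i, ∑ j, A i j * u j ^ 2 = u ⬝ᵥ u := by
    rw [sum_comm]
    simp [← sum_mul, hcol, dotProduct, sq]
  have hquad : ∑ i, ∑ j, A i j * u i * u j = u ⬝ᵥ (A *ᵥ u) := by
    simp only [dotProduct, mulVec, mul_sum]
    exact sum_congr rfl fun i _ => sum_congr rfl fun j _ => by ring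
  calc dirichletForm A u
      = ∑ i, ∑ j, (A i j * u i ^ 2 + A i j * u j ^ 2 - 2 * (A i j * u i * u j)) :=
        sum_congr rfl fun i _ => sum_congr rfl fun j _ => by ring
    _ = 2 * (u ⬝ᵥ u - u ⬝ᵥ (A *ᵥ u)) := by
        simp only [sum_add_distrib, sum_sub_distrib, ← mul_sum, hrow', hcol', hquad]
        ring

theorem dirichletForm_nonneg (hA : ∀ i j, 0 ≤ A i j) (u : ι → ℝ) : 0 ≤ dirichletForm A u :=
  sum_nonneg fun i _ => sum_nonneg fun j _ => mul_nonneg (hA i j) (sq_nonneg _)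

theorem eq_of_dirichletForm_eq_zero (hA : ∀ i j, 0 ≤ A i j) {u : ι → ℝ}
    (hu : dirichletForm A u = 0) {i j : ι} (hij : A i j ≠ 0) : u i = u j := by
  have hnonneg (i j : ι) : 0 ≤ A i j * (u i - u j) ^ 2 := mul_nonneg (hA i j) (sq_nonneg _)
  have hrow := (Fintype.sum_eq_zero_iff_of_nonneg fun i => sum_nonneg fun j _ => hnonneg i j).1 hu
  have hterm := (Fintype.sum_eq_zero_iff_of_nonneg (hnonneg i)).1 (congrFun hrow i)
  have := (mul_eq_zero.1 (congrFun hterm j)).resolve_left hij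
  exact sub_eq_zero.1 (pow_eq_zero_iff two_ne_zero |>.1 this)

theorem dirichletForm_le_mul [DecidableEq ι] (hA : ∀ i j, 0 ≤ A i j)
    (hrow : ∀ i, ∑ j, A i j = 1) {u : ι → ℝ} {c : ℝ}
    (h : ∀ i j, i ≠ j → A i j ≠ 0 → (u i - u j) ^ 2 ≤ c) :
    dirichletForm A u ≤ c * (Fintype.card ι - A.trace) := by
  have hterm (i j : ι) : A i j * (u i - u j) ^ 2 ≤ c * (A i j - if i = j then A i j else 0) := by
    by_cases hij : i = j
    · simp [hij]
    by_cases hAij : A i j = 0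
    · simp [hAij]
    rw [if_neg hij, sub_zero, mul_comm c]
    exact mul_le_mul_of_nonneg_left (h i j hij hAij) (hA i j)
  calc dirichletForm A u ≤ ∑ i, ∑ j, c * (A i j - if i = j then A i j else 0) :=
        sum_le_sum fun i _ => sum_le_sum fun j _ => hterm i j
    _ = c * (Fintype.card ι - A.trace) := by
        simp [← mul_sum, sum_sub_distrib, hrow, trace]

theorem dirichletForm_eq_of_single_edge (hsymm : A.IsSymm) {u : ι → ℝ} {p q : ι} (hpq : p ≠ q)
    (h : ∀ i j, A i j ≠ 0 → u i ≠ u j → i = p ∧ j = q ∨ i = q ∧ j = p) :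
    dirichletForm A u = 2 * A p q * (u p - u q) ^ 2 := by
  rw [dirichletForm, ← Fintype.sum_prod_type', Fintype.sum_eq_add (p, q) (q, p) (by simp [hpq])]
  · rw [hsymm.apply p q]
    ring
  rintro ⟨i, j⟩ hij
  by_contra hne
  obtain ⟨hA, hu⟩ := mul_ne_zero_iff.1 hne
  rcases h i j hA (fun heq => hu (by simp [heq])) with ⟨rfl, rfl⟩ | ⟨rfl, rfl⟩ <;> simp at hij

theorem one_sub_lt_of_dirichletForm_lt (hrow : ∀ i, ∑ j, A i j = 1)
    (hcol : ∀ j, ∑ i, A i j = 1) {μ c : ℝ}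
    (hμ : ∀ u : ι → ℝ, ∑ i, u i = 0 → u ⬝ᵥ (A *ᵥ u) ≤ μ * (u ⬝ᵥ u)) {u : ι → ℝ}
    (hu : ∑ i, u i = 0) (hE : dirichletForm A u < 2 * c * (u ⬝ᵥ u)) : 1 - c < μ := by
  have hle := hμ u hu
  rw [dirichletForm_eq hrow hcol] at hE
  have huu : 0 ≤ u ⬝ᵥ u := Fintype.sum_nonneg fun i => mul_self_nonneg (u i)
  refine lt_of_mul_lt_mul_right ?_ huu
  linarith

theorem lt_one_of_reflTransGen (hnonneg : ∀ i j, 0 ≤ A i j) (hrow : ∀ i, ∑ j, A i j = 1)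
    (hcol : ∀ j, ∑ i, A i j = 1)
    (hconn : ∀ i j, Relation.ReflTransGen (fun a b => A a b ≠ 0) i j) {μ : ℝ} {v : ι → ℝ}
    (hv : v ≠ 0) (hAv : A *ᵥ v = μ • v) (hsum : ∑ i, v i = 0) : μ < 1 := by
  by_contra! hμ
  have hE : dirichletForm A v = 0 := by
    have h := dirichletForm_eq hrow hcol v
    rw [hAv, dotProduct_smul, smul_eq_mul] at h
    have hvv : 0 ≤ v ⬝ᵥ v := Fintype.sum_nonneg fun i => mul_self_nonneg (v i)
    nlinarith [dirichletForm_nonneg hnonneg v]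
  have hconst (i j : ι) : v i = v j := by
    induction hconn i j with
    | refl => rfl
    | tail _ hbc ih => exact ih.trans (eq_of_dirichletForm_eq_zero hnonneg hE hbc)
  obtain ⟨i, hi⟩ := Function.ne_iff.1 hv
  have : Nonempty ι := ⟨i⟩
  have hsum' : ∑ j, v j = Fintype.card ι * v i := by
    rw [Fintype.sum_congr _ _ fun j => hconst j i]
    simp
  rw [hsum'] at hsum
  exact hi ((mul_eq_zero.1 hsum).resolve_left (by positivity))

end DirichletForm

section TestVectors

variable {ι : Type*} [Fintype ι] [DecidableEq ι]

def cutVector (S : Finset ι) (i : ι) : ℝ :=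
  if i ∈ S then -(#Sᶜ : ℝ) else #S

theorem sum_comp_cutVector (S : Finset ι) (f : ℝ → ℝ) :
    ∑ i, f (cutVector S i) = #S * f (-#Sᶜ) + #Sᶜ * f #S := by
  have hS : ∑ i ∈ S, f (cutVector S i) = ∑ _i ∈ S, f (-#Sᶜ) :=
    sum_congr rfl fun i hi => by simp [cutVector, hi]
  have hSc : ∑ i ∈ Sᶜ, f (cutVector S i) = ∑ _i ∈ Sᶜ, f #S :=
    sum_congr rfl fun i hi => by simp [cutVector, mem_compl.1 hi]
  rw [← sum_add_sum_compl S, hS, hSc]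
  simp

theorem sum_cutVector (S : Finset ι) : ∑ i, cutVector S i = 0 := by
  have := sum_comp_cutVector S id
  simp only [id] at this
  rw [this]
  ring

theorem cutVector_dotProduct_self (S : Finset ι) :
    cutVector S ⬝ᵥ cutVector S = #S * #Sᶜ * Fintype.card ι := by
  rw [dotProduct, sum_comp_cutVector S fun x => x * x, ← card_add_card_compl S]
  push_cast
  ring

end TestVectors

theorem sum_range_natCast (n : ℕ) : ∑ i ∈ range n, (i : ℝ) = n * (n - 1) / 2 := by
  induction n with
  | zero => simp
  | succ n ih => rw [sum_range_succ, ih]; push_cast; ring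

theorem sum_range_natCast_sq (n : ℕ) :
    ∑ i ∈ range n, (i : ℝ) ^ 2 = n * (n - 1) * (2 * n - 1) / 6 := by
  induction n with
  | zero => simp
  | succ n ih => rw [sum_range_succ, ih]; push_cast; ring

def IsTridiagonal {n : ℕ} {α : Type*} [Zero α] (A : Matrix (Fin n) (Fin n) α) : Prop :=
  ∀ i j : Fin n, 1 < |(i : ℤ) - (j : ℤ)| → A i j = 0

namespace IsTridiagonal

variable {n : ℕ} {α : Type*} {A : Matrix (Fin n) (Fin n) α}

theorem le_add_one_of_ne_zero [Zero α] (hA : IsTridiagonal A) {i j : Fin n} (h : A i j ≠ 0) :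
    (i : ℕ) ≤ j + 1 ∧ (j : ℕ) ≤ i + 1 := by
  by_contra hc
  exact h (hA i j (lt_abs.2 (by omega)))

theorem sum_row_eq [AddCommMonoid α] (hA : IsTridiagonal A) {p q r : Fin n}
    (hpq : (p : ℕ) + 1 = q) (hqr : (q : ℕ) + 1 = r) :
    ∑ j, A q j = A q p + A q q + A q r := by
  classical
  rw [← sum_subset (subset_univ {p, q, r}) fun j _ hj => ?_]
  · rw [sum_insert (by simp [Fin.ext_iff]; omega), sum_pair (by simp [Fin.ext_iff]; omega),
      add_assoc]
  · by_contra h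
    have := hA.le_add_one_of_ne_zero h
    simp only [mem_insert, mem_singleton, Fin.ext_iff] at hj
    omega

theorem sum_first_row_eq [AddCommMonoid α] (hA : IsTridiagonal A) {p q : Fin n}
    (hp : (p : ℕ) = 0) (hpq : (p : ℕ) + 1 = q) :
    ∑ j, A p j = A p p + A p q := by
  classical
  rw [← sum_subset (subset_univ {p, q}) fun j _ hj => ?_]
  · rw [sum_pair (by simp [Fin.ext_iff]; omega)]
  · by_contra h
    have := hA.le_add_one_of_ne_zero h
    simp only [mem_insert, mem_singleton, Fin.ext_iff] at hj
    omega

end IsTridiagonal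

/-- Consecutive equations give `s (k + 2) = s k + d (k + 1) - d (k + 2)`, so `s` at an odd index
is an alternating sum of `d 0, …, d (2 * q + 1)`. -/
theorem le_sum_range_of_add_add_eq_one {s d : ℕ → ℝ} {N : ℕ} (hd : ∀ k, 0 ≤ d k)
    (h₀ : d 0 + s 0 = 1) (hstep : ∀ k, k + 2 < N → s k + d (k + 1) + s (k + 1) = 1) {q : ℕ}
    (hq : 2 * q + 2 < N) : s (2 * q + 1) ≤ ∑ i ∈ range (2 * q + 2), d i := by
  induction q with
  | zero =>
    have := hstep 0 hq
    simp only [sum_range_succ, sum_range_zero]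
    linarith [hd 1]
  | succ q ih =>
    have h₁ : s (2 * q + 1) + d (2 * q + 2) + s (2 * q + 2) = 1 := hstep _ (by omega)
    have h₂ : s (2 * q + 2) + d (2 * q + 3) + s (2 * q + 3) = 1 := hstep _ (by omega)
    have := ih (by omega)
    rw [show 2 * (q + 1) + 1 = 2 * q + 3 by ring, show 2 * (q + 1) + 2 = 2 * q + 2 + 1 + 1 by ring,
      sum_range_succ, sum_range_succ]
    linarith [hd (2 * q + 3)]

theorem IsTridiagonal.apply_odd_succ_le_trace {n : ℕ} {A : Matrix (Fin n) (Fin n) ℝ}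
    (hA : IsTridiagonal A) (hsymm : A.IsSymm) (hnonneg : ∀ i j, 0 ≤ A i j)
    (hrow : ∀ i, ∑ j, A i j = 1) {q : ℕ} (hq : 2 * q + 2 < n) :
    A ⟨2 * q + 1, by omega⟩ ⟨2 * q + 2, hq⟩ ≤ A.trace := by
  set d : ℕ → ℝ := fun k => if h : k < n then A ⟨k, h⟩ ⟨k, h⟩ else 0
  set s : ℕ → ℝ := fun k => if h : k + 1 < n then A ⟨k, by omega⟩ ⟨k + 1, h⟩ else 0
  have hd (k : ℕ) : 0 ≤ d k := by
    simp only [d]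
    split_ifs
    exacts [hnonneg _ _, le_rfl]
  have h₀ : d 0 + s 0 = 1 := by
    simp only [d, s, dif_pos (show 0 < n by omega), dif_pos (show 0 + 1 < n by omega)]
    rw [← hrow ⟨0, by omega⟩, hA.sum_first_row_eq (q := ⟨1, by omega⟩) rfl rfl]
  have hstep (k : ℕ) (hk : k + 2 < n) : s k + d (k + 1) + s (k + 1) = 1 := by
    simp only [d, s, dif_pos hk, dif_pos (show k + 1 < n by omega)]
    rw [← hrow ⟨k + 1, by omega⟩, hA.sum_row_eq (p := ⟨k, by omega⟩) (r := ⟨k + 2, hk⟩) rfl rfl,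
      hsymm.apply]
  calc A ⟨2 * q + 1, by omega⟩ ⟨2 * q + 2, hq⟩ = s (2 * q + 1) := by simp [s, hq]
    _ ≤ ∑ i ∈ range (2 * q + 2), d i := le_sum_range_of_add_add_eq_one hd h₀ hstep hq
    _ ≤ ∑ i ∈ range n, d i :=
        sum_le_sum_of_subset_of_nonneg (range_subset_range.2 (by omega)) fun i _ _ => hd i
    _ = A.trace := by
        rw [trace, ← Fin.sum_univ_eq_sum_range]
        simp [d]

theorem exists_sq_lt_six_mul {n : ℕ} (hn : 3 ≤ n) :
    ∃ q, 2 * q + 2 < n ∧ n ^ 2 < 6 * (2 * q + 2) * (n - (2 * q + 2)) := by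
  obtain ⟨q, r, hr, rfl⟩ : ∃ q r, r < 4 ∧ n = 4 * q + r + 2 :=
    ⟨(n - 2) / 4, (n - 2) % 4, Nat.mod_lt _ (by norm_num), by omega⟩
  refine ⟨q, by omega, ?_⟩
  rw [show 4 * q + r + 2 - (2 * q + 2) = 2 * q + r by omega]
  interval_cases r
  · have : 1 ≤ q := by omega
    nlinarith
  all_goals nlinarith

theorem IsTridiagonal.exists_dirichletForm_lt_of_inv_lt_trace {n : ℕ}
    {A : Matrix (Fin n) (Fin n) ℝ} (hA : IsTridiagonal A) (hnonneg : ∀ i j, 0 ≤ A i j)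
    (hrow : ∀ i, ∑ j, A i j = 1) (hD : 1 / (n : ℝ) < A.trace) :
    ∃ u : Fin n → ℝ, ∑ i, u i = 0 ∧ dirichletForm A u < 2 * (6 / (n : ℝ) ^ 2) * (u ⬝ᵥ u) := by
  have hn : (0 : ℝ) < n := by
    rcases Nat.eq_zero_or_pos n with rfl | hn
    · simp [trace] at hD
    · exact_mod_cast hn
  set u : Fin n → ℝ := fun i => 2 * (i : ℕ) - (n - 1)
  have hsum : ∑ i, u i = 0 := by
    rw [Fin.sum_univ_eq_sum_range (fun i => 2 * (i : ℝ) - (n - 1)), sum_sub_distrib, ← mul_sum,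
      sum_range_natCast, sum_const, card_range, nsmul_eq_mul]
    ring
  have hnorm : u ⬝ᵥ u = n * (n ^ 2 - 1) / 3 := by
    rw [dotProduct, Fin.sum_univ_eq_sum_range
      (fun i => (2 * (i : ℝ) - (n - 1)) * (2 * (i : ℝ) - (n - 1)))]
    simp only [show ∀ x : ℝ, (2 * x - (n - 1)) * (2 * x - (n - 1))
      = 4 * x ^ 2 - 4 * (n - 1) * x + (n - 1) ^ 2 from fun x => by ring]
    rw [sum_add_distrib, sum_sub_distrib, ← mul_sum, ← mul_sum, sum_range_natCast,
      sum_range_natCast_sq, sum_const, card_range, nsmul_eq_mul]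
    ring
  have hE : dirichletForm A u ≤ 4 * (n - A.trace) := by
    refine (dirichletForm_le_mul (c := 4) hnonneg hrow fun i j _ hij => ?_).trans_eq (by simp)
    obtain ⟨hij, hji⟩ := hA.le_add_one_of_ne_zero hij
    have hij' : ((i : ℕ) : ℝ) ≤ j + 1 := by exact_mod_cast hij
    have hji' : ((j : ℕ) : ℝ) ≤ i + 1 := by exact_mod_cast hji
    simp only [u]
    nlinarith
  refine ⟨u, hsum, hE.trans_lt ?_⟩
  rw [hnorm]
  rw [div_lt_iff₀ hn] at hD
  field_simp
  nlinarith

theorem IsTridiagonal.exists_dirichletForm_lt_of_trace_le_inv {n : ℕ} (hn : 3 ≤ n)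
    {A : Matrix (Fin n) (Fin n) ℝ} (hA : IsTridiagonal A) (hsymm : A.IsSymm)
    (hnonneg : ∀ i j, 0 ≤ A i j) (hrow : ∀ i, ∑ j, A i j = 1) (hD : A.trace ≤ 1 / (n : ℝ)) :
    ∃ u : Fin n → ℝ, ∑ i, u i = 0 ∧ dirichletForm A u < 2 * (6 / (n : ℝ) ^ 2) * (u ⬝ᵥ u) := by
  obtain ⟨q, hq, hsplit⟩ := exists_sq_lt_six_mul hn
  set p : Fin n := ⟨2 * q + 1, by omega⟩
  set p' : Fin n := ⟨2 * q + 2, hq⟩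
  set S := Iic p
  have hmem (k : Fin n) : k ∈ S ↔ (k : ℕ) ≤ 2 * q + 1 := by
    simp [S, p, Fin.le_iff_val_le_val]
  have hS : #S = 2 * q + 2 := by simp [S, p]
  have hSc : #Sᶜ = n - (2 * q + 2) := by rw [card_compl, hS, Fintype.card_fin]
  have hpp' : p ≠ p' := by simp [p, p', Fin.ext_iff]
  have hedge (i j : Fin n) (hij : A i j ≠ 0) (hu : cutVector S i ≠ cutVector S j) :
      i = p ∧ j = p' ∨ i = p' ∧ j = p := by
    have hcut : ¬ (i ∈ S ↔ j ∈ S) := fun h => hu (by simp only [cutVector, h])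
    have := hA.le_add_one_of_ne_zero hij
    rw [hmem, hmem] at hcut
    simp only [p, p', Fin.ext_iff]
    omega
  have hjump : cutVector S p - cutVector S p' = -n := by
    have hp : p ∈ S := (hmem p).2 le_rfl
    have hp' : p' ∉ S := fun h => by simpa [p'] using (hmem p').1 h
    rw [cutVector, cutVector, if_pos hp, if_neg hp', hS, hSc, Nat.cast_sub hq.le]
    push_cast
    ring
  have hE : dirichletForm A (cutVector S) = 2 * A p p' * n ^ 2 := by
    rw [dirichletForm_eq_of_single_edge hsymm hpp' hedge, hjump, neg_sq]
  refine ⟨cutVector S, sum_cutVector S, ?_⟩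
  rw [hE, cutVector_dotProduct_self, hS, hSc, Fintype.card_fin]
  have hn' : (0 : ℝ) < n := by positivity
  have hweight : A p p' * n ≤ 1 := by
    rw [← le_div_iff₀ hn']
    exact (hA.apply_odd_succ_le_trace hsymm hnonneg hrow hq).trans hD
  have hsplit' := (Nat.cast_lt (α := ℝ)).2 hsplit
  push_cast [Nat.cast_sub hq.le] at hsplit' ⊢
  generalize A p p' = s at hweight ⊢
  rw [show 2 * (6 / (n : ℝ) ^ 2) * ((2 * q + 2) * (n - (2 * q + 2)) * n)
    = 12 * ((2 * q + 2) * (n - (2 * q + 2)) * n) / n ^ 2 by ring, lt_div_iff₀ (by positivity)]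
  nlinarith [mul_le_mul_of_nonneg_right hweight (by positivity : (0 : ℝ) ≤ 2 * n ^ 3),
    mul_lt_mul_of_pos_right hsplit' (by positivity : (0 : ℝ) < 2 * n)]

theorem stmt6_general (n : ℕ) (hn : 3 ≤ n) (A : Matrix (Fin n) (Fin n) ℝ)
    (hsymm : A.IsSymm)
    (hnonneg : ∀ i j, 0 ≤ A i j)
    (hrow : ∀ i, ∑ j, A i j = 1)
    (htridiag : ∀ i j : Fin n, 1 < |(i : ℤ) - (j : ℤ)| → A i j = 0)
    (h1A : ∀ j, ∑ i, A i j = 1)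
    (hconn : ∀ i j : Fin n, Relation.ReflTransGen (fun a b => A a b ≠ 0) i j) :
    ∃ (lam : ℝ) (v : Fin n → ℝ), v ≠ 0 ∧ A.mulVec v = lam • v ∧
      1 - 6 / (n : ℝ) ^ 2 < lam ∧ lam < 1 ∧ (∑ i, v i) = 0 := by
  have : Nontrivial (Fin n) := Fin.nontrivial_iff_two_le.2 (by omega)
  obtain ⟨lam, v, hv, hAv, hsum, hmax⟩ := hsymm.exists_eigenvector_sum_eq_zero h1A
  refine ⟨lam, v, hv, hAv, ?_, lt_one_of_reflTransGen hnonneg hrow h1A hconn hv hAv hsum, hsum⟩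
  obtain ⟨u, hu, hE⟩ := (lt_or_ge (1 / (n : ℝ)) A.trace).elim
    (IsTridiagonal.exists_dirichletForm_lt_of_inv_lt_trace htridiag hnonneg hrow)
    (IsTridiagonal.exists_dirichletForm_lt_of_trace_le_inv hn htridiag hsymm hnonneg hrow)
  exact one_sub_lt_of_dirichletForm_lt hrow h1A hmax hu hE

theorem stmt6 (n : ℕ) (hn : 3 ≤ n) (A : Matrix (Fin n) (Fin n) ℝ)
    (hsymm : A.IsSymm)
    (hnonneg : ∀ i j, 0 ≤ A i j)
    (hrow : ∀ i, ∑ j, A i j = 1)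
    (htridiag : ∀ i j : Fin n, 1 < |(i : ℤ) - (j : ℤ)| → A i j = 0)
    (hA1 : A.mulVec (fun _ => 1) = fun _ => 1)
    (h1A : ∀ j, ∑ i, A i j = 1)
    (hconn : ∀ i j : Fin n, Relation.ReflTransGen (fun a b => A a b ≠ 0) i j)
    (hmax : ∀ μ : ℂ, μ ∈ spectrum ℂ (A.map (algebraMap ℝ ℂ)) → ‖μ‖ ≤ 1) :
    ∃ (lam : ℝ) (v : Fin n → ℝ), v ≠ 0 ∧ A.mulVec v = lam • v ∧
      1 - 6 / (n : ℝ) ^ 2 < lam ∧ lam < 1 ∧ (∑ i, v i) = 0 :=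
  stmt6_general n hn A hsymm hnonneg hrow htridiag h1A hconn
end

section
/- Let A be an n×n real matrix such that A𝟙 = 𝟙 and for every x with 𝟙ᵀx = 0, lim_{m→∞} Aᵐx = 0. Suppose also that for some nonempty proper subset S of {1,...,n}, a_{ij} = 0 for all i ∈ S and j ∉ S. Then a contradiction arises; i.e., if Aᵏx → x̄𝟙 for all x, the directed graph on {1,...,n} with edges {(i,j): a_{ij} ≠ 0} must be strongly connected. -/
/-!
If no entry of `A` leads from `S` out of `S`, then every power of `A` maps vectors vanishing on `S`
to vectors vanishing on `S`. Take `y` the indicator of `Sᶜ` and `x = n • y - #Sᶜ • 𝟙`, which sums to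
zero. As `Aᵐ 𝟙 = 𝟙`, the entry of `Aᵐ x` at any `i ∈ S` is the constant `-#Sᶜ ≠ 0`, so `Aᵐ x ↛ 0`.
-/

open Finset Matrix

namespace Matrix

variable {ι R : Type*} [Fintype ι] [Semiring R]

theorem mulVec_apply_eq_zero_of_forall_mem {A : Matrix ι ι R} {S : Set ι}
    (hA : ∀ i ∈ S, ∀ j ∉ S, A i j = 0) {v : ι → R} (hv : ∀ j ∈ S, v j = 0) :
    ∀ i ∈ S, (A *ᵥ v) i = 0 := by
  intro i hi
  refine sum_eq_zero fun j _ => ?_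
  by_cases hj : j ∈ S
  · exact mul_eq_zero_of_right _ (hv j hj)
  · exact mul_eq_zero_of_left (hA i hi j hj) _

variable [DecidableEq ι]

theorem pow_mulVec_apply_eq_zero_of_forall_mem {A : Matrix ι ι R} {S : Set ι}
    (hA : ∀ i ∈ S, ∀ j ∉ S, A i j = 0) {v : ι → R} (hv : ∀ j ∈ S, v j = 0) (m : ℕ) :
    ∀ i ∈ S, (A ^ m *ᵥ v) i = 0 := by
  induction m with
  | zero => simpa using hv
  | succ m ih =>
    rw [pow_succ', ← mulVec_mulVec]
    exact mulVec_apply_eq_zero_of_forall_mem hA ih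

theorem pow_mulVec_of_mulVec_eq {A : Matrix ι ι R} {v : ι → R} (hv : A *ᵥ v = v) (m : ℕ) :
    A ^ m *ᵥ v = v := by
  induction m with
  | zero => simp
  | succ m ih => rw [pow_succ', ← mulVec_mulVec, ih, hv]

end Matrix

theorem stmt13_general (n : ℕ) (A : Matrix (Fin n) (Fin n) ℝ)
    (hA1 : A.mulVec (fun _ => 1) = fun _ => 1)
    (hconv : ∀ x : Fin n → ℝ, (∑ i, x i) = 0 →
      Filter.Tendsto (fun m => (A ^ m).mulVec x) Filter.atTop (nhds 0)) :
    ∀ S : Finset (Fin n), S.Nonempty → S ≠ Finset.univ →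
      ∃ i ∈ S, ∃ j ∉ S, A i j ≠ 0 := by
  intro S ⟨i₀, hi₀⟩ hS
  by_contra! hA
  let k : ℝ := Sᶜ.card
  have hk : k ≠ 0 := by
    simpa [k, compl_eq_empty_iff] using hS
  let y : Fin n → ℝ := fun j => if j ∈ S then 0 else 1
  let x : Fin n → ℝ := (n : ℝ) • y - k • fun _ => 1
  have hy : ∑ j, y j = k := by
    simp [y, k, sum_ite, filter_not, compl_eq_univ_sdiff]
  have hx : ∑ i, x i = 0 := by
    simp [x, sum_sub_distrib, ← mul_sum, hy]
  have hAx (m : ℕ) : (A ^ m *ᵥ x) i₀ = -k := by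
    have hAy : (A ^ m *ᵥ y) i₀ = 0 :=
      pow_mulVec_apply_eq_zero_of_forall_mem (S := S) hA (by simp +contextual [y]) m i₀ hi₀
    simp [x, mulVec_sub, mulVec_smul, pow_mulVec_of_mulVec_eq hA1, hAy]
  have hlim := ((continuous_apply i₀).tendsto _).comp (hconv x hx)
  simp only [Function.comp_def, hAx, Pi.zero_apply] at hlim
  exact hk (neg_eq_zero.mp (tendsto_nhds_unique tendsto_const_nhds hlim))

theorem stmt13 (n : ℕ) (hn : 0 < n) (A : Matrix (Fin n) (Fin n) ℝ)
    (hA1 : A.mulVec (fun _ => 1) = fun _ => 1)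
    (hconv : ∀ x : Fin n → ℝ, (∑ i, x i) = 0 →
      Filter.Tendsto (fun m => (A ^ m).mulVec x) Filter.atTop (nhds 0)) :
    ∀ S : Finset (Fin n), S.Nonempty → S ≠ Finset.univ →
      ∃ i ∈ S, ∃ j ∉ S, A i j ≠ 0 :=
  stmt13_general n A hA1 hconv
end

section
/- Let f: ℝⁿ → ℝⁿ be differentiable with f(0) = 0, and let A = f'(0) be its Jacobian at 0. Suppose there exists τ such that for all nonzero x, ‖f^τ(x)‖₂ ≤ (1/2)‖x‖₂ eventually near 0 (i.e., for x in some ball around the origin). Then for all x with 𝟙ᵀx = 0 lying in a sufficiently small ball, lim_{m→∞} (A^τ)ᵐ x = 0; in particular ‖A^τ x‖₂ ≤ (3/4)‖x‖₂ for all such x, hence lim_{m→∞} Aᵐx = 0 for all x with 𝟙ᵀx = 0. -/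
/-!
By the chain rule `f^[τ]` has derivative `A ^ τ` at the fixed point `0`, where `A = f'(0)`.
Since `f^[τ]` halves norms near `0` and differs from `A ^ τ` by `o(‖x‖)`, homogeneity gives
`‖A ^ τ‖ ≤ 1/2`. Hence `(A ^ τ) ^ m → 0` in operator norm, and so does `A ^ m`, because
`A ^ m = (A ^ τ) ^ (m / τ) * A ^ (m % τ)` and the second factor takes only finitely many values.
-/

open Filter Topology

theorem HasFDerivAt.opNorm_le_of_eventually_norm_le {𝕜 E F : Type*} [NontriviallyNormedField 𝕜]
    [NormedAddCommGroup E] [NormedSpace 𝕜 E] [NormedAddCommGroup F] [NormedSpace 𝕜 F]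
    {g : E → F} {L : E →L[𝕜] F} (hg : HasFDerivAt g L 0) (hg0 : g 0 = 0) {c : ℝ} (hc : 0 ≤ c)
    (h : ∀ᶠ y in 𝓝[≠] 0, ‖g y‖ ≤ c * ‖y‖) : ‖L‖ ≤ c := by
  refine le_of_forall_pos_le_add fun ε hε => L.opNorm_le_of_nhds_zero (by positivity) ?_
  have hlin : ∀ᶠ y in 𝓝 0, ‖g y - L y‖ ≤ ε * ‖y‖ := by
    simpa [hg0] using hg.isLittleO.def hε
  filter_upwards [hlin, eventually_nhdsWithin_iff.mp h] with y hlin_y hg_y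
  rcases eq_or_ne y 0 with rfl | hy
  · simp
  calc ‖L y‖ ≤ ‖g y‖ + ‖g y - L y‖ := norm_le_insert _ _
    _ ≤ c * ‖y‖ + ε * ‖y‖ := add_le_add (hg_y hy) hlin_y
    _ = (c + ε) * ‖y‖ := by ring

theorem tendsto_pow_atTop_nhds_zero_of_norm_pow_lt_one {R : Type*} [NormedRing R] {a : R} {τ : ℕ}
    (ha : ‖a ^ τ‖ < 1) : Tendsto (fun m : ℕ => a ^ m) atTop (𝓝 0) := by
  rcases subsingleton_or_nontrivial R with hR | hR
  · simpa only [Subsingleton.elim _ (0 : R)] using tendsto_const_nhds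
  have hτ : 0 < τ := Nat.pos_of_ne_zero fun h0 => by
    simp only [h0, pow_zero] at ha
    linarith [one_le_norm_one R]
  have hquot : Tendsto (fun m => (a ^ τ) ^ (m / τ)) atTop (𝓝 0) :=
    (tendsto_pow_atTop_nhds_zero_of_norm_lt_one ha).comp (map_div_atTop_eq_nat τ hτ).le
  have hrem : IsBoundedUnder (· ≤ ·) atTop (fun m => ‖a ^ (m % τ)‖) :=
    isBoundedUnder_of ⟨∑ r ∈ Finset.range τ, ‖a ^ r‖, fun m =>
      Finset.single_le_sum (fun r _ => norm_nonneg (a ^ r))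
        (Finset.mem_range.mpr (Nat.mod_lt m hτ))⟩
  refine (hquot.zero_mul_isBoundedUnder_le hrem).congr fun m => ?_
  rw [← pow_mul, ← pow_add, Nat.div_add_mod]

theorem stmt14 (n : ℕ) (f : EuclideanSpace ℝ (Fin n) → EuclideanSpace ℝ (Fin n))
    (hdiff : Differentiable ℝ f) (hf0 : f 0 = 0)
    (τ : ℕ)
    (hcontraction : ∃ ε > 0, ∀ x : EuclideanSpace ℝ (Fin n),
      ‖x‖ < ε → x ≠ 0 → ‖f^[τ] x‖ ≤ (1 / 2) * ‖x‖) :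
    ∀ x : EuclideanSpace ℝ (Fin n), (∑ i, x i) = 0 →
      Filter.Tendsto (fun m => (((fderiv ℝ f 0) ^ τ) ^ m) x) Filter.atTop (nhds 0) ∧
      ‖((fderiv ℝ f 0) ^ τ) x‖ ≤ (3 / 4) * ‖x‖ ∧
      Filter.Tendsto (fun m => ((fderiv ℝ f 0) ^ m) x) Filter.atTop (nhds 0) := by
  set A := fderiv ℝ f 0
  obtain ⟨ε, hε, hhalf⟩ := hcontraction
  have hhalf_near : ∀ᶠ y in 𝓝[≠] 0, ‖f^[τ] y‖ ≤ 1 / 2 * ‖y‖ := by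
    filter_upwards [inter_mem_nhdsWithin _ (Metric.ball_mem_nhds 0 hε)] with y ⟨hy0, hy⟩
    exact hhalf y (mem_ball_zero_iff.mp hy) hy0
  have hnorm : ‖A ^ τ‖ ≤ 1 / 2 :=
    ((hdiff 0).hasFDerivAt.iterate hf0 τ).opNorm_le_of_eventually_norm_le
      (Function.iterate_fixed hf0 τ) (by norm_num) hhalf_near
  have happly : ∀ {B : ℕ → EuclideanSpace ℝ (Fin n) →L[ℝ] EuclideanSpace ℝ (Fin n)} x,
      Tendsto B atTop (𝓝 0) → Tendsto (fun m => B m x) atTop (𝓝 0) := fun x hB => by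
    exact ((ContinuousLinearMap.apply ℝ _ x).continuous.tendsto' 0 0 (by simp)).comp hB
  intro x _
  refine ⟨happly x (tendsto_pow_atTop_nhds_zero_of_norm_lt_one (by linarith)), ?_,
    happly x (tendsto_pow_atTop_nhds_zero_of_norm_pow_lt_one (by linarith))⟩
  calc ‖(A ^ τ) x‖ ≤ 1 / 2 * ‖x‖ := (A ^ τ).le_of_opNorm_le hnorm x
    _ ≤ 3 / 4 * ‖x‖ := by linarith [norm_nonneg x]
end

section
/- Consider vectors x(t) ∈ ℝⁿ evolving by x(t+1) = A(t)x(t), where each A(t) is doubly stochastic with positive diagonal, all positive entries at least η > 0, and the sequence of associated graphs satisfies the relaxed connectivity condition: for each block of B consecutive steps starting at tB, and for each 'cut' d with x_d(tB) ≠ x_{d+1}(tB) (components sorted in nonincreasing order), some edge crosses between {1,...,d} and {d+1,...,n} during the block. Let V(t) be the sample variance of x(t). Then whenever V(tB) > 0, (V(tB) − V((t+1)B))/V(tB) ≥ η/(2n²). -/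
open Finset Matrix

theorem sum_Ico_sub_succ {M : Type*} [AddCommGroup M] (f : ℕ → M) {m n : ℕ} (h : m ≤ n) :
    ∑ i ∈ Ico m n, (f i - f (i + 1)) = f m - f n := by
  simpa only [neg_sub_neg] using sum_Ico_sub (fun i => -f i) h

theorem exists_first_hitting_time (P : ℕ → Prop) {t₀ t₁ : ℕ} (h : t₀ ≤ t₁) :
    ∃ τ ∈ Icc t₀ t₁, (τ < t₁ → P τ) ∧ ∀ u ∈ Ico t₀ τ, ¬ P u := by
  classical
  have hex : ∃ s, t₀ ≤ s ∧ (P s ∨ t₁ ≤ s) := ⟨t₁, h, Or.inr le_rfl⟩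
  obtain ⟨hτ₀, hτ⟩ := Nat.find_spec hex
  refine ⟨Nat.find hex, mem_Icc.2 ⟨hτ₀, Nat.find_min' hex ⟨h, Or.inr le_rfl⟩⟩,
    fun hlt => hτ.resolve_right (not_le.2 hlt), fun u hu hPu => ?_⟩
  obtain ⟨hu₀, hu⟩ := mem_Ico.1 hu
  exact Nat.find_min hex hu ⟨hu₀, Or.inl hPu⟩

theorem sum_sum_mul_mul_sub_sq {ι : Type*} [Fintype ι] (a u : ι → ℝ) :
    ∑ j, ∑ k, a j * a k * (u j - u k) ^ 2
      = 2 * ((∑ j, a j) * ∑ j, a j * u j ^ 2 - (∑ j, a j * u j) ^ 2) := by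
  calc ∑ j, ∑ k, a j * a k * (u j - u k) ^ 2
      = ∑ j, ∑ k, (a j * u j ^ 2 * a k + a j * (a k * u k ^ 2)
          - 2 * (a j * u j * (a k * u k))) :=
        sum_congr rfl fun j _ => sum_congr rfl fun k _ => by ring
    _ = _ := by
        simp only [sum_add_distrib, sum_sub_distrib, ← mul_sum, ← sum_mul]
        ring

theorem sum_sum_transpose_mul_mul {ι : Type*} [Fintype ι] (A : Matrix ι ι ℝ) (f : ι → ι → ℝ) :
    ∑ j, ∑ k, (Aᵀ * A) j k * f j k = ∑ m, ∑ j, ∑ k, A m j * A m k * f j k := by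
  simp only [mul_apply, transpose_apply, sum_mul]
  exact (sum_congr rfl fun j _ => sum_comm).trans sum_comm

theorem sampleVar_sub_sampleVar_of_sum_eq {n : ℕ} {z w : Fin n → ℝ}
    (h : ∑ i, z i = ∑ i, w i) :
    sampleVar z - sampleVar w = ∑ i, z i ^ 2 - ∑ i, w i ^ 2 := by
  simp only [sampleVar, sub_sq, sum_add_distrib, sum_sub_distrib, ← sum_mul, ← mul_sum, h]
  ring

theorem sampleVar_comp_equiv {n : ℕ} (z : Fin n → ℝ) (σ : Equiv.Perm (Fin n)) :
    sampleVar (z ∘ σ) = sampleVar z := by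
  simp only [sampleVar, Function.comp_apply, Equiv.sum_comp σ]
  exact Equiv.sum_comp σ fun i => (z i - (∑ j, z j) / n) ^ 2

theorem sampleVar_sub_sampleVar_mulVec {n : ℕ} {A : Matrix (Fin n) (Fin n) ℝ}
    (hA : A ∈ doublyStochastic ℝ (Fin n)) (z : Fin n → ℝ) :
    sampleVar z - sampleVar (A *ᵥ z) = 1 / 2 * ∑ j, ∑ k, (Aᵀ * A) j k * (z j - z k) ^ 2 := by
  have hrow : ∀ m, ∑ j, ∑ k, A m j * A m k * (z j - z k) ^ 2
      = 2 * (∑ j, A m j * z j ^ 2 - (A *ᵥ z) m ^ 2) := fun m => by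
    rw [sum_sum_mul_mul_sub_sq, sum_row_of_mem_doublyStochastic hA, one_mul]
    rfl
  have hcol : ∑ m, ∑ j, A m j * z j ^ 2 = ∑ j, z j ^ 2 := by
    rw [sum_comm]
    simp only [← sum_mul, sum_col_of_mem_doublyStochastic hA, one_mul]
  rw [sampleVar_sub_sampleVar_of_sum_eq (sum_mulVec_of_mem_doublyStochastic hA).symm,
    sum_sum_transpose_mul_mul, sum_congr rfl fun m _ => hrow m, ← mul_sum, sum_sub_distrib, hcol]
  ring

theorem sampleVar_le_of_mem_Icc {n : ℕ} {z : Fin n → ℝ} {a b : ℝ} (h : ∀ i, z i ∈ Set.Icc b a) :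
    sampleVar z ≤ n * (a - b) ^ 2 := by
  have hsum_le : ∑ j, z j ≤ n * a := by simpa using sum_le_sum fun j (_ : j ∈ univ) => (h j).2
  have hle_sum : n * b ≤ ∑ j, z j := by simpa using sum_le_sum fun j (_ : j ∈ univ) => (h j).1
  have hterm : ∀ i, (z i - (∑ j, z j) / n) ^ 2 ≤ (a - b) ^ 2 := by
    intro i
    have hn : (0 : ℝ) < n := by exact_mod_cast i.pos
    have hmean_le : (∑ j, z j) / n ≤ a := by rw [div_le_iff₀ hn]; linarith
    have hle_mean : b ≤ (∑ j, z j) / n := by rw [le_div_iff₀ hn]; linarith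
    obtain ⟨hbz, hza⟩ := h i
    exact sq_le_sq' (by linarith) (by linarith)
  simpa [sampleVar] using sum_le_sum fun i (_ : i ∈ univ) => hterm i

section Cuts

variable {ι : Type*}

def CrossesCut (A : Matrix ι ι ℝ) (p : ι → Prop) : Prop :=
  ∃ i j, p i ∧ ¬ p j ∧ (0 < A i j ∨ 0 < A j i)

def CutBounds (p : ι → Prop) (a b : ℝ) (z : ι → ℝ) : Prop :=
  ∀ i, (p i → a ≤ z i) ∧ (¬ p i → z i ≤ b)

def cutIndicator (p : ι → Prop) [DecidablePred p] (i : ι) : ℝ :=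
  if p i then 1 else 0

theorem eq_zero_of_not_crossesCut {A : Matrix ι ι ℝ} (hA : ∀ i j, 0 ≤ A i j) {p : ι → Prop}
    (hc : ¬ CrossesCut A p) {i j : ι} (hij : p i ↔ ¬ p j) : A i j = 0 := by
  by_contra hne
  have hpos := lt_of_le_of_ne (hA i j) (Ne.symm hne)
  by_cases hi : p i
  · exact hc ⟨i, j, hi, hij.1 hi, Or.inl hpos⟩
  · exact hc ⟨j, i, not_not.1 (mt hij.2 hi), hi, Or.inr hpos⟩

theorem CutBounds.mulVec [Fintype ι] [DecidableEq ι] {A : Matrix ι ι ℝ}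
    (hA : A ∈ rowStochastic ℝ ι) {p : ι → Prop} (hc : ¬ CrossesCut A p) {a b : ℝ} {z : ι → ℝ}
    (hz : CutBounds p a b z) :
    CutBounds p a b (A *ᵥ z) := by
  have hA₀ : ∀ i j, 0 ≤ A i j := fun i j => nonneg_of_mem_rowStochastic hA
  intro i
  constructor
  · intro hi
    calc a = ∑ j, A i j * a := by rw [← sum_mul, sum_row_of_mem_rowStochastic hA, one_mul]
      _ ≤ ∑ j, A i j * z j := sum_le_sum fun j _ => by
          by_cases hj : p j
          · exact mul_le_mul_of_nonneg_left ((hz j).1 hj) (hA₀ i j)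
          · rw [eq_zero_of_not_crossesCut hA₀ hc (iff_of_true hi hj), zero_mul, zero_mul]
  · intro hi
    calc (A *ᵥ z) i = ∑ j, A i j * z j := rfl
      _ ≤ ∑ j, A i j * b := sum_le_sum fun j _ => by
          by_cases hj : p j
          · rw [eq_zero_of_not_crossesCut hA₀ hc (iff_of_false hi (not_not.2 hj)), zero_mul,
              zero_mul]
          · exact mul_le_mul_of_nonneg_left ((hz j).2 hj) (hA₀ i j)
      _ = b := by rw [← sum_mul, sum_row_of_mem_rowStochastic hA, one_mul]

theorem CutBounds.of_forall_not_crossesCut [Fintype ι] [DecidableEq ι] {M : ℕ → Matrix ι ι ℝ}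
    (hM : ∀ s, M s ∈ rowStochastic ℝ ι) {y : ℕ → ι → ℝ} (hy : ∀ s, y (s + 1) = M s *ᵥ y s)
    {p : ι → Prop} {a b : ℝ} {t₀ s : ℕ} (hs : t₀ ≤ s) (h₀ : CutBounds p a b (y t₀))
    (hno : ∀ u ∈ Ico t₀ s, ¬ CrossesCut (M u) p) : CutBounds p a b (y s) := by
  induction s, hs using Nat.le_induction with
  | base => exact h₀
  | succ s hs ih =>
    rw [hy]
    exact (ih fun u hu => hno u (Ico_subset_Ico_right s.le_succ hu)).mulVec (hM s)
      (hno s (mem_Ico.2 ⟨hs, s.lt_succ_self⟩))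

theorem exists_row_of_crossesCut [Fintype ι] {A : Matrix ι ι ℝ} (hA : ∀ i j, 0 ≤ A i j) {η : ℝ}
    (hdiag : ∀ i, 0 < A i i) (hmin : ∀ i j, 0 < A i j → η ≤ A i j) {p : ι → Prop}
    [DecidablePred p] (hc : CrossesCut A p) :
    ∃ m, η ≤ ∑ j with p j, A m j ∧ η ≤ ∑ j with ¬ p j, A m j := by
  have hle : ∀ (q : ι → Prop) [DecidablePred q] {m j}, q j → A m j ≤ ∑ k with q k, A m k :=
    fun q _ m j hj => single_le_sum (fun k _ => hA m k) (mem_filter.2 ⟨mem_univ j, hj⟩)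
  obtain ⟨i, j, hi, hj, hij | hji⟩ := hc
  · exact ⟨i, (hmin i i (hdiag i)).trans (hle p hi), (hmin i j hij).trans (hle _ hj)⟩
  · exact ⟨j, (hmin j i hji).trans (hle p hi), (hmin j j (hdiag j)).trans (hle _ hj)⟩

theorem le_sum_transpose_mul_cutIndicator [Fintype ι] [DecidableEq ι] {A : Matrix ι ι ℝ}
    (hA : A ∈ rowStochastic ℝ ι) (p : ι → Prop) [DecidablePred p] {m : ι} {η : ℝ}
    (hin : η ≤ ∑ j with p j, A m j) (hout : η ≤ ∑ j with ¬ p j, A m j) :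
    η ≤ ∑ j, ∑ k, (Aᵀ * A) j k * (cutIndicator p j - cutIndicator p k) ^ 2 := by
  set c := cutIndicator p
  set r := ∑ j with p j, A m j
  set q := ∑ j with ¬ p j, A m j
  have hr₀ : 0 ≤ r := sum_nonneg fun j _ => nonneg_of_mem_rowStochastic hA
  have hq₀ : 0 ≤ q := sum_nonneg fun j _ => nonneg_of_mem_rowStochastic hA
  have hc : ∀ j, A m j * c j ^ 2 = A m j * c j := fun j => by
    simp only [c, cutIndicator]; split_ifs <;> norm_num
  have hr : ∑ j, A m j * c j = r := by simp [c, cutIndicator, r, sum_filter]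
  have hsplit : r + q = 1 := by
    rw [sum_filter_add_sum_filter_not, sum_row_of_mem_rowStochastic hA]
  have hterm : ∀ m' j k, 0 ≤ A m' j * A m' k * (c j - c k) ^ 2 := fun m' j k =>
    mul_nonneg (mul_nonneg (nonneg_of_mem_rowStochastic hA) (nonneg_of_mem_rowStochastic hA))
      (sq_nonneg _)
  -- row `m` alone puts weight `2 r (1 - r) ≥ η` on the pairs across the cut
  calc η ≤ 2 * (1 * r - r ^ 2) := by
        nlinarith [mul_nonneg hr₀ (sub_nonneg.2 hout), mul_nonneg hq₀ (sub_nonneg.2 hin)]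
    _ = ∑ j, ∑ k, A m j * A m k * (c j - c k) ^ 2 := by
        rw [sum_sum_mul_mul_sub_sq, sum_row_of_mem_rowStochastic hA, sum_congr rfl fun j _ => hc j,
          hr]
    _ ≤ ∑ m', ∑ j, ∑ k, A m' j * A m' k * (c j - c k) ^ 2 :=
        single_le_sum (f := fun m' => ∑ j, ∑ k, A m' j * A m' k * (c j - c k) ^ 2)
          (fun m' _ => sum_nonneg fun j _ => sum_nonneg fun k _ => hterm m' j k) (mem_univ m)
    _ = _ := (sum_sum_transpose_mul_mul A _).symm

end Cuts

abbrev leCut {n : ℕ} (d : ℕ) (i : Fin n) : Prop := (i : ℕ) ≤ d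

theorem sum_sq_sub_succ_le_sq {Y : ℕ → ℝ} (hY : Antitone Y) {T : Finset ℕ} {a b : ℝ}
    (h : ∀ d ∈ T, Y d ≤ a ∧ b ≤ Y (d + 1)) : ∑ d ∈ T, (Y d - Y (d + 1)) ^ 2 ≤ (a - b) ^ 2 := by
  rcases T.eq_empty_or_nonempty with rfl | hT
  · simpa using sq_nonneg (a - b)
  have hgap : ∀ d, 0 ≤ Y d - Y (d + 1) := fun d => sub_nonneg.2 (hY d.le_succ)
  have hsub : T ⊆ Ico (T.min' hT) (T.max' hT + 1) := fun d hd =>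
    mem_Ico.2 ⟨min'_le T d hd, Nat.lt_succ_of_le (le_max' T d hd)⟩
  have hsum : ∑ d ∈ T, (Y d - Y (d + 1)) ≤ a - b :=
    calc ∑ d ∈ T, (Y d - Y (d + 1))
        ≤ ∑ d ∈ Ico (T.min' hT) (T.max' hT + 1), (Y d - Y (d + 1)) :=
          sum_le_sum_of_subset_of_nonneg hsub fun d _ _ => hgap d
      _ = Y (T.min' hT) - Y (T.max' hT + 1) :=
          sum_Ico_sub_succ Y (Nat.le_succ_of_le (min'_le_max' T hT))
      _ ≤ a - b := sub_le_sub (h _ (min'_mem T hT)).1 (h _ (max'_mem T hT)).2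
  calc ∑ d ∈ T, (Y d - Y (d + 1)) ^ 2 ≤ (∑ d ∈ T, (Y d - Y (d + 1))) ^ 2 :=
        sum_sq_le_sq_sum_of_nonneg fun d _ => hgap d
    _ ≤ (a - b) ^ 2 := pow_le_pow_left₀ (sum_nonneg fun d _ => hgap d) hsum 2

theorem sum_cutIndicator_sub_sq_mul_le {n : ℕ} {Y : ℕ → ℝ} (hY : Antitone Y) {S : Finset ℕ}
    {z : Fin n → ℝ} (hz : ∀ d ∈ S, CutBounds (leCut d) (Y d) (Y (d + 1)) z) (j k : Fin n) :
    ∑ d ∈ S, (cutIndicator (leCut d) j - cutIndicator (leCut d) k) ^ 2 * (Y d - Y (d + 1)) ^ 2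
      ≤ (z j - z k) ^ 2 := by
  wlog hjk : j ≤ k generalizing j k
  · simpa only [sub_sq_comm] using this k j (le_of_not_ge hjk)
  have hsep : ∀ d, (cutIndicator (leCut d) j - cutIndicator (leCut d) k) ^ 2 * (Y d - Y (d + 1)) ^ 2
      = if (j : ℕ) ≤ d ∧ d < k then (Y d - Y (d + 1)) ^ 2 else 0 := fun d => by
    rw [Fin.le_def] at hjk
    simp only [cutIndicator, leCut]
    split_ifs <;> first | (exfalso; omega) | simp
  rw [sum_congr rfl fun d _ => hsep d, ← sum_filter]
  refine sum_sq_sub_succ_le_sq hY fun d hd => ?_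
  obtain ⟨hdS, hjd, hdk⟩ := by simpa only [mem_filter] using hd
  exact ⟨(hz d hdS j).1 hjd, (hz d hdS k).2 (not_le.2 hdk)⟩

theorem le_sampleVar_sub_sampleVar_mulVec {n : ℕ} {A : Matrix (Fin n) (Fin n) ℝ}
    (hA : A ∈ doublyStochastic ℝ (Fin n)) {Y : ℕ → ℝ} (hY : Antitone Y) {S : Finset ℕ}
    {z : Fin n → ℝ} {η : ℝ}
    (hweight : ∀ d ∈ S, η ≤ ∑ j, ∑ k,
      (Aᵀ * A) j k * (cutIndicator (leCut d) j - cutIndicator (leCut d) k) ^ 2)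
    (hz : ∀ d ∈ S, CutBounds (leCut d) (Y d) (Y (d + 1)) z) :
    η / 2 * ∑ d ∈ S, (Y d - Y (d + 1)) ^ 2 ≤ sampleVar z - sampleVar (A *ᵥ z) := by
  have hW : ∀ j k, 0 ≤ (Aᵀ * A) j k := fun j k => nonneg_of_mem_doublyStochastic
    (Submonoid.mul_mem _ (transpose_mem_doublyStochastic_iff.2 hA) hA)
  rw [sampleVar_sub_sampleVar_mulVec hA]
  calc η / 2 * ∑ d ∈ S, (Y d - Y (d + 1)) ^ 2
      = 1 / 2 * ∑ d ∈ S, η * (Y d - Y (d + 1)) ^ 2 := by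
        simp only [mul_sum]; exact sum_congr rfl fun _ _ => by ring
    _ ≤ 1 / 2 * ∑ d ∈ S, (∑ j, ∑ k, (Aᵀ * A) j k *
          (cutIndicator (leCut d) j - cutIndicator (leCut d) k) ^ 2) * (Y d - Y (d + 1)) ^ 2 := by
        gcongr with d hd
        exact hweight d hd
    _ = 1 / 2 * ∑ j, ∑ k, (Aᵀ * A) j k * ∑ d ∈ S,
          (cutIndicator (leCut d) j - cutIndicator (leCut d) k) ^ 2 * (Y d - Y (d + 1)) ^ 2 := by
        simp only [sum_mul, mul_sum]
        rw [sum_comm]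
        refine sum_congr rfl fun j _ => ?_
        rw [sum_comm]
        exact sum_congr rfl fun k _ => sum_congr rfl fun d _ => by ring
    _ ≤ 1 / 2 * ∑ j, ∑ k, (Aᵀ * A) j k * (z j - z k) ^ 2 := by
        gcongr with j _ k _
        · exact hW j k
        · exact sum_cutIndicator_sub_sq_mul_le hY hz j k

theorem sampleVar_le_sq_mul_sum_sq_sub_succ {n : ℕ} {Y : ℕ → ℝ} (hY : Antitone Y)
    {z : Fin n → ℝ} (hz : ∀ i : Fin n, z i = Y i) :
    sampleVar z ≤ n ^ 2 * ∑ d ∈ range (n - 1), (Y d - Y (d + 1)) ^ 2 := by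
  have hspan : sampleVar z ≤ n * (Y 0 - Y (n - 1)) ^ 2 :=
    sampleVar_le_of_mem_Icc fun i => by
      rw [hz]
      exact ⟨hY (Nat.le_sub_one_of_lt i.isLt), hY (Nat.zero_le _)⟩
  have hCS : (Y 0 - Y (n - 1)) ^ 2 ≤ n * ∑ d ∈ range (n - 1), (Y d - Y (d + 1)) ^ 2 := by
    rw [← sum_range_sub']
    refine sq_sum_le_card_mul_sum_sq.trans ?_
    gcongr
    rw [card_range]
    exact_mod_cast n.sub_le 1
  calc sampleVar z ≤ n * (Y 0 - Y (n - 1)) ^ 2 := hspan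
    _ ≤ n * (n * ∑ d ∈ range (n - 1), (Y d - Y (d + 1)) ^ 2) := by gcongr
    _ = n ^ 2 * ∑ d ∈ range (n - 1), (Y d - Y (d + 1)) ^ 2 := by ring

theorem le_sampleVar_sub_sampleVar_of_crossings {n : ℕ} {M : ℕ → Matrix (Fin n) (Fin n) ℝ}
    (hM : ∀ s, M s ∈ doublyStochastic ℝ (Fin n)) {η : ℝ} (hdiag : ∀ s i, 0 < M s i i)
    (hmin : ∀ s i j, 0 < M s i j → η ≤ M s i j) {y : ℕ → Fin n → ℝ}
    (hy : ∀ s, y (s + 1) = M s *ᵥ y s) {t₀ t₁ : ℕ} (ht : t₀ ≤ t₁) {Y : ℕ → ℝ}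
    (hY : Antitone Y) (hYy : ∀ i : Fin n, Y i = y t₀ i)
    (hcross : ∀ d, d + 1 < n → Y (d + 1) ≠ Y d → ∃ s ∈ Ico t₀ t₁, CrossesCut (M s) (leCut d)) :
    η / 2 * ∑ d ∈ range (n - 1), (Y d - Y (d + 1)) ^ 2 ≤ sampleVar (y t₀) - sampleVar (y t₁) := by
  have hrow : ∀ s, M s ∈ rowStochastic ℝ (Fin n) := fun s =>
    (mem_doublyStochastic_iff_mem_rowStochastic_and_mem_colStochastic.1 (hM s)).1
  choose τ hτ using fun d => exists_first_hitting_time (fun s => CrossesCut (M s) (leCut d)) ht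
  set R := (range (n - 1)).filter fun d => Y (d + 1) ≠ Y d
  have hτR : ∀ d ∈ R, τ d ∈ Ico t₀ t₁ := by
    intro d hd
    obtain ⟨hdn, hne⟩ := mem_filter.1 hd
    obtain ⟨s, hs, hcs⟩ := hcross d (by rw [mem_range] at hdn; omega) hne
    obtain ⟨hτI, -, hfirst⟩ := hτ d
    refine mem_Ico.2 ⟨(mem_Icc.1 hτI).1, lt_of_not_ge fun hge => hfirst s ?_ hcs⟩
    exact mem_Ico.2 ⟨(mem_Ico.1 hs).1, (mem_Ico.1 hs).2.trans_le hge⟩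
  -- a cut is charged to the step at which it is first crossed
  have hstep : ∀ s ∈ Ico t₀ t₁, η / 2 * ∑ d ∈ R with τ d = s, (Y d - Y (d + 1)) ^ 2
      ≤ sampleVar (y s) - sampleVar (y (s + 1)) := by
    intro s _
    rw [hy s]
    apply le_sampleVar_sub_sampleVar_mulVec (hM s) hY
    · intro d hd
      obtain ⟨hdR, rfl⟩ := mem_filter.1 hd
      obtain ⟨m, hin, hout⟩ := exists_row_of_crossesCut (A := M (τ d))
        (fun i j => nonneg_of_mem_doublyStochastic (hM _)) (hdiag _) (hmin _)
        ((hτ d).2.1 (mem_Ico.1 (hτR d hdR)).2)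
      exact le_sum_transpose_mul_cutIndicator (hrow _) _ hin hout
    · intro d hd
      obtain ⟨-, rfl⟩ := mem_filter.1 hd
      refine CutBounds.of_forall_not_crossesCut hrow hy (mem_Icc.1 (hτ d).1).1 (fun i => ?_)
        (hτ d).2.2
      rw [← hYy]
      exact ⟨fun hi => hY hi, fun hi => hY (not_le.1 hi)⟩
  have hR : ∑ d ∈ R, (Y d - Y (d + 1)) ^ 2 = ∑ d ∈ range (n - 1), (Y d - Y (d + 1)) ^ 2 :=
    sum_filter_of_ne fun d _ hd hYd => hd (by rw [hYd, sub_self, sq, zero_mul])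
  calc η / 2 * ∑ d ∈ range (n - 1), (Y d - Y (d + 1)) ^ 2
      = ∑ s ∈ Ico t₀ t₁, η / 2 * ∑ d ∈ R with τ d = s, (Y d - Y (d + 1)) ^ 2 := by
        rw [← hR, ← sum_fiberwise_of_maps_to hτR, mul_sum]
    _ ≤ ∑ s ∈ Ico t₀ t₁, (sampleVar (y s) - sampleVar (y (s + 1))) := sum_le_sum hstep
    _ = sampleVar (y t₀) - sampleVar (y t₁) := sum_Ico_sub_succ _ ht

theorem stmt15_general (n B : ℕ) (hn : 0 < n)
    (A : ℕ → Matrix (Fin n) (Fin n) ℝ) (η : ℝ) (hη : 0 < η)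
    -- nonnegative with row and column sums one (double stochasticity)
    (hnonneg : ∀ t i j, 0 ≤ A t i j)
    (hrow : ∀ t i, ∑ j, A t i j = 1)
    (hcol : ∀ t j, ∑ i, A t i j = 1)
    -- positive diagonal and non-vanishing weights
    (hdiag : ∀ t i, 0 < A t i i)
    (hmin : ∀ t i j, 0 < A t i j → η ≤ A t i j)
    (x : ℕ → Fin n → ℝ)
    (hdyn : ∀ t, x (t + 1) = (A t).mulVec (x t))
    -- relaxed connectivity: in every block, each cut with unequal sorted values
    -- is crossed by some edge
    (hconn : ∀ t : ℕ, ∃ σ : Equiv.Perm (Fin n),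
      (∀ i j : Fin n, i ≤ j → x (t * B) (σ j) ≤ x (t * B) (σ i)) ∧
      ∀ d : ℕ, ∀ hd : d + 1 < n,
        x (t * B) (σ ⟨d + 1, hd⟩) = x (t * B) (σ ⟨d, Nat.lt_of_succ_lt hd⟩) ∨
        ∃ s, t * B ≤ s ∧ s < (t + 1) * B ∧
          ∃ i j : Fin n, (i : ℕ) ≤ d ∧ d < (j : ℕ) ∧
            (0 < A s (σ i) (σ j) ∨ 0 < A s (σ j) (σ i))) :
    ∀ t : ℕ, 0 < sampleVar (x (t * B)) →
      η / (2 * (n : ℝ) ^ 2) ≤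
        (sampleVar (x (t * B)) - sampleVar (x ((t + 1) * B))) /
          sampleVar (x (t * B)) := by
  intro t hV
  obtain ⟨σ, hsorted, hcut⟩ := hconn t
  set Y : ℕ → ℝ := fun d => x (t * B) (σ ⟨min d (n - 1), by omega⟩)
  have hY : Antitone Y := fun a b hab => hsorted _ _ (Fin.mk_le_mk.2 (min_le_min_right _ hab))
  have hYy : ∀ i : Fin n, Y i = x (t * B) (σ i) := fun i => by
    simp only [Y, min_eq_left (Nat.le_sub_one_of_lt i.isLt)]
  have hM : ∀ s, (A s).submatrix σ σ ∈ doublyStochastic ℝ (Fin n) := fun s =>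
    reindex_mem_doublyStochastic (e₁ := σ.symm) (e₂ := σ.symm)
      (mem_doublyStochastic_iff_sum.2 ⟨hnonneg s, hrow s, hcol s⟩)
  have hy : ∀ s, x (s + 1) ∘ σ = (A s).submatrix σ σ *ᵥ (x s ∘ σ) := fun s => by
    rw [submatrix_mulVec_equiv, Function.comp_assoc, Equiv.self_comp_symm, Function.comp_id, hdyn]
  have hblock := le_sampleVar_sub_sampleVar_of_crossings (y := fun s => x s ∘ σ) hM
    (fun s i => hdiag s (σ i)) (fun s i j => hmin s (σ i) (σ j)) hy
    (Nat.mul_le_mul_right B t.le_succ) hY hYy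
    fun d hd hne => by
      obtain heq | ⟨s, hs₀, hs₁, i, j, hi, hj, hij⟩ := hcut d hd
      · exact absurd (by rw [hYy ⟨d + 1, hd⟩, hYy ⟨d, by omega⟩]; exact heq) hne
      · exact ⟨s, mem_Ico.2 ⟨hs₀, hs₁⟩, i, j, hi, not_le.2 hj, hij⟩
  have hvar := sampleVar_le_sq_mul_sum_sq_sub_succ (z := x (t * B) ∘ σ) hY fun i => (hYy i).symm
  simp only [sampleVar_comp_equiv] at hblock hvar
  set K := ∑ d ∈ range (n - 1), (Y d - Y (d + 1)) ^ 2
  rw [div_le_div_iff₀ (by positivity) hV]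
  calc η * sampleVar (x (t * B)) ≤ η * (n ^ 2 * K) := by gcongr
    _ = η / 2 * K * (2 * n ^ 2) := by ring
    _ ≤ _ := mul_le_mul_of_nonneg_right hblock (by positivity)

theorem stmt15 (n B : ℕ) (hn : 0 < n) (hB : 0 < B)
    (A : ℕ → Matrix (Fin n) (Fin n) ℝ) (η : ℝ) (hη : 0 < η)
    -- nonnegative with row and column sums one (double stochasticity)
    (hnonneg : ∀ t i j, 0 ≤ A t i j)
    (hrow : ∀ t i, ∑ j, A t i j = 1)
    (hcol : ∀ t j, ∑ i, A t i j = 1)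
    -- positive diagonal and non-vanishing weights
    (hdiag : ∀ t i, 0 < A t i i)
    (hmin : ∀ t i j, 0 < A t i j → η ≤ A t i j)
    -- undirected graphs
    (hsym : ∀ t i j, 0 < A t i j ↔ 0 < A t j i)
    (x : ℕ → Fin n → ℝ)
    (hdyn : ∀ t, x (t + 1) = (A t).mulVec (x t))
    -- relaxed connectivity: in every block, each cut with unequal sorted values
    -- is crossed by some edge
    (hconn : ∀ t : ℕ, ∃ σ : Equiv.Perm (Fin n),
      (∀ i j : Fin n, i ≤ j → x (t * B) (σ j) ≤ x (t * B) (σ i)) ∧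
      ∀ d : ℕ, ∀ hd : d + 1 < n,
        x (t * B) (σ ⟨d + 1, hd⟩) = x (t * B) (σ ⟨d, Nat.lt_of_succ_lt hd⟩) ∨
        ∃ s, t * B ≤ s ∧ s < (t + 1) * B ∧
          ∃ i j : Fin n, (i : ℕ) ≤ d ∧ d < (j : ℕ) ∧
            (0 < A s (σ i) (σ j) ∨ 0 < A s (σ j) (σ i))) :
    ∀ t : ℕ, 0 < sampleVar (x (t * B)) →
      η / (2 * (n : ℝ) ^ 2) ≤
        (sampleVar (x (t * B)) - sampleVar (x ((t + 1) * B))) /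
          sampleVar (x (t * B)) :=
  stmt15_general n B hn A η hη hnonneg hrow hcol hdiag hmin x hdyn hconn
end

section
/- Let A be a stochastic n×n matrix and π an entrywise positive vector with πᵀA = πᵀ and πᵀ𝟙 = 1. Let D = diag(π) and H = I − 𝟙πᵀ, and set M = HᵀDH. Then: (i) M𝟙 = 0; (ii) HA = AH; (iii) for every x ∈ ℝⁿ, xᵀAᵀMAx ≤ xᵀMx. In particular M is symmetric, nonnegative definite, of rank n−1, and x ↦ xᵀMx is a quadratic Lyapunov function for the iteration x ↦ Ax. -/
/-!
Write `m = π ⬝ᵥ x` for the `π`-mean of `x`. Since `H x = x - m 𝟙`, the form `xᵀ M x` is the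
`π`-weighted variance `∑ πᵢ (xᵢ - m)² = ∑ πᵢ xᵢ² - m²`. Stationarity `πᵀ A = πᵀ` preserves the
mean, while Jensen's inequality on each row of `A`, `(A x)ᵢ² ≤ (A x²)ᵢ`, together with
stationarity shows that the second moment does not increase; hence neither does the variance.
As `π > 0`, the variance vanishes only on constants, so `ker M = ℝ 𝟙` and `M` has rank `n - 1`.
-/

open Matrix Finset

variable {ι : Type*} [Fintype ι]

section WeightedGram

variable [DecidableEq ι] {κ : Type*} [Fintype κ] {π : ι → ℝ}

theorem dotProduct_transpose_mul_diagonal_mul_mulVec (B : Matrix ι κ ℝ) (x : κ → ℝ) :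
    x ⬝ᵥ (Bᵀ * diagonal π * B) *ᵥ x = π ⬝ᵥ (B *ᵥ x) ^ 2 := by
  rw [Matrix.mul_assoc, ← mulVec_mulVec, ← mulVec_mulVec, dotProduct_mulVec, vecMul_transpose]
  simp only [dotProduct, mulVec_diagonal, Pi.pow_apply]
  exact sum_congr rfl fun i _ => by ring

theorem posSemidef_transpose_mul_diagonal_mul (hπ : ∀ i, 0 ≤ π i) (B : Matrix ι κ ℝ) :
    (Bᵀ * diagonal π * B).PosSemidef := by
  simpa only [conjTranspose_eq_transpose_of_trivial] using
    (posSemidef_diagonal_iff.2 hπ).conjTranspose_mul_mul_same B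

end WeightedGram

theorem dotProduct_sq_eq_zero_iff {π : ι → ℝ} (hπ : ∀ i, 0 < π i) {y : ι → ℝ} :
    π ⬝ᵥ y ^ 2 = 0 ↔ y = 0 := by
  refine ⟨fun h => funext fun i => ?_, fun h => by simp [h]⟩
  have := (sum_eq_zero_iff_of_nonneg fun j _ => mul_nonneg (hπ j).le (sq_nonneg (y j))).1 h i
    (mem_univ i)
  simpa [(hπ i).ne'] using this

theorem dotProduct_sub_const_sq {π : ι → ℝ} (hπ1 : ∑ i, π i = 1) (x : ι → ℝ) :
    π ⬝ᵥ (x - fun _ => π ⬝ᵥ x) ^ 2 = π ⬝ᵥ x ^ 2 - (π ⬝ᵥ x) ^ 2 := by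
  set m := π ⬝ᵥ x
  have hm : ∑ i, π i * x i = m := rfl
  calc π ⬝ᵥ (x - fun _ => m) ^ 2
        = ∑ i, (π i * x i ^ 2 - 2 * m * (π i * x i) + m ^ 2 * π i) := by
        simp only [dotProduct, Pi.pow_apply, Pi.sub_apply]
        exact sum_congr rfl fun i _ => by ring
    _ = π ⬝ᵥ x ^ 2 - m ^ 2 := by
        rw [sum_add_distrib, sum_sub_distrib, ← mul_sum, ← mul_sum, hm, hπ1]
        simp only [dotProduct, Pi.pow_apply]
        ring

section Stochastic

variable {A : Matrix ι ι ℝ}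

theorem sq_mulVec_le_mulVec_sq (hA : ∀ i j, 0 ≤ A i j) (hrow : ∀ i, ∑ j, A i j = 1)
    (x : ι → ℝ) (i : ι) : (A *ᵥ x) i ^ 2 ≤ (A *ᵥ x ^ 2) i := by
  simp only [mulVec, dotProduct, Pi.pow_apply]
  simpa only [smul_eq_mul] using (even_two.convexOn_pow (𝕜 := ℝ)).map_sum_le
    (fun j _ => hA i j) (hrow i) (fun j _ => Set.mem_univ (x j))

theorem dotProduct_mulVec_sq_le {π : ι → ℝ} (hπ : ∀ i, 0 ≤ π i) (hA : ∀ i j, 0 ≤ A i j)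
    (hrow : ∀ i, ∑ j, A i j = 1) (hπA : π ᵥ* A = π) (x : ι → ℝ) :
    π ⬝ᵥ (A *ᵥ x) ^ 2 ≤ π ⬝ᵥ x ^ 2 :=
  calc π ⬝ᵥ (A *ᵥ x) ^ 2 ≤ π ⬝ᵥ A *ᵥ x ^ 2 :=
        sum_le_sum fun i _ => mul_le_mul_of_nonneg_left (sq_mulVec_le_mulVec_sq hA hrow x i) (hπ i)
    _ = π ⬝ᵥ x ^ 2 := by rw [dotProduct_mulVec, hπA]

end Stochastic

section Centering

variable [DecidableEq ι] {π : ι → ℝ}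

theorem centering_mulVec (x : ι → ℝ) :
    (1 - replicateRow ι π) *ᵥ x = x - fun _ => π ⬝ᵥ x := by
  rw [sub_mulVec, one_mulVec, replicateRow_mulVec_eq_const]
  rfl

theorem centering_mulVec_const (hπ1 : ∑ i, π i = 1) (c : ℝ) :
    (1 - replicateRow ι π) *ᵥ (fun _ => c) = 0 := by
  rw [centering_mulVec]
  ext i
  simp [dotProduct, ← sum_mul, hπ1]

theorem centering_mul_comm {A : Matrix ι ι ℝ} (hrow : ∀ i, ∑ j, A i j = 1) (hπA : π ᵥ* A = π) :
    (1 - replicateRow ι π) * A = A * (1 - replicateRow ι π) := by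
  have hleft : replicateRow ι π * A = replicateRow ι π := by rw [← replicateRow_vecMul, hπA]
  have hright : A * replicateRow ι π = replicateRow ι π := by
    ext i j
    simp [mul_apply, ← sum_mul, hrow]
  rw [Matrix.sub_mul, Matrix.mul_sub, hleft, hright, Matrix.one_mul, Matrix.mul_one]

def varianceMatrix (π : ι → ℝ) : Matrix ι ι ℝ :=
  (1 - replicateRow ι π)ᵀ * diagonal π * (1 - replicateRow ι π)

theorem varianceMatrix_mulVec_const (hπ1 : ∑ i, π i = 1) (c : ℝ) :
    varianceMatrix π *ᵥ (fun _ => c) = 0 := by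
  rw [varianceMatrix, ← mulVec_mulVec, centering_mulVec_const hπ1, mulVec_zero]

theorem dotProduct_varianceMatrix_mulVec (hπ1 : ∑ i, π i = 1) (x : ι → ℝ) :
    x ⬝ᵥ varianceMatrix π *ᵥ x = π ⬝ᵥ x ^ 2 - (π ⬝ᵥ x) ^ 2 := by
  rw [varianceMatrix, dotProduct_transpose_mul_diagonal_mul_mulVec, centering_mulVec,
    dotProduct_sub_const_sq hπ1]

theorem ker_varianceMatrix (hπ : ∀ i, 0 < π i) (hπ1 : ∑ i, π i = 1) :
    LinearMap.ker (varianceMatrix π).mulVecLin = ℝ ∙ fun _ => 1 := by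
  refine le_antisymm (fun x hx => ?_) ?_
  · have hMx : varianceMatrix π *ᵥ x = 0 := hx
    have hHx : (1 - replicateRow ι π) *ᵥ x = 0 := by
      rw [← dotProduct_sq_eq_zero_iff hπ, ← dotProduct_transpose_mul_diagonal_mul_mulVec]
      exact (congrArg (x ⬝ᵥ ·) hMx).trans (dotProduct_zero x)
    rw [centering_mulVec, sub_eq_zero] at hHx
    exact Submodule.mem_span_singleton.2 ⟨π ⬝ᵥ x, by ext i; simpa using (congrFun hHx i).symm⟩
  · rw [Submodule.span_le, Set.singleton_subset_iff]
    exact varianceMatrix_mulVec_const hπ1 1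

theorem rank_varianceMatrix (hπ : ∀ i, 0 < π i) (hπ1 : ∑ i, π i = 1) :
    (varianceMatrix π).rank = Fintype.card ι - 1 := by
  have hne : Nonempty ι := by
    by_contra h
    simp [not_nonempty_iff.1 h] at hπ1
  have hone : (fun _ => 1 : ι → ℝ) ≠ 0 := fun h =>
    one_ne_zero (congrFun h (Classical.arbitrary ι))
  have := LinearMap.finrank_range_add_finrank_ker (varianceMatrix π).mulVecLin
  rw [ker_varianceMatrix hπ hπ1, finrank_span_singleton hone, Module.finrank_fintype_fun_eq_card]
    at this
  rw [Matrix.rank]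
  omega

end Centering

theorem stmt19 (n : ℕ) (A : Matrix (Fin n) (Fin n) ℝ)
    (hnonneg : ∀ i j, 0 ≤ A i j)
    (hrow : ∀ i, ∑ j, A i j = 1)
    (π : Fin n → ℝ) (hπ : ∀ i, 0 < π i)
    (hπA : ∀ j, ∑ i, π i * A i j = π j)
    (hπ1 : ∑ i, π i = 1) :
    let D : Matrix (Fin n) (Fin n) ℝ := Matrix.diagonal π
    let H : Matrix (Fin n) (Fin n) ℝ := 1 - Matrix.of (fun _ j => π j)
    let M : Matrix (Fin n) (Fin n) ℝ := Hᵀ * D * H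
    M.mulVec (fun _ => 1) = 0 ∧
    H * A = A * H ∧
    (∀ x : Fin n → ℝ,
      (A.mulVec x) ⬝ᵥ M.mulVec (A.mulVec x) ≤ x ⬝ᵥ M.mulVec x) ∧
    M.IsSymm ∧ M.PosSemidef ∧ M.rank = n - 1 := by
  intro D H M
  have hπA : π ᵥ* A = π := funext hπA
  have hM : M.PosSemidef := posSemidef_transpose_mul_diagonal_mul (fun i => (hπ i).le) H
  refine ⟨varianceMatrix_mulVec_const hπ1 1, centering_mul_comm hrow hπA, fun x => ?_,
    isHermitian_iff_isSymm.1 hM.isHermitian, hM, ?_⟩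
  · change A *ᵥ x ⬝ᵥ varianceMatrix π *ᵥ (A *ᵥ x) ≤ x ⬝ᵥ varianceMatrix π *ᵥ x
    rw [dotProduct_varianceMatrix_mulVec hπ1, dotProduct_varianceMatrix_mulVec hπ1,
      dotProduct_mulVec, hπA]
    exact sub_le_sub_right (dotProduct_mulVec_sq_le (fun i => (hπ i).le) hnonneg hrow hπA x) _
  · exact (rank_varianceMatrix hπ hπ1).trans (by rw [Fintype.card_fin])
end
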